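/- arXiv:1609.08724 — 6 statements merged into one kernel-verified Lean document; each statement's English description precedes it below -/
import Mathlib

section
/- Let θ be an irrational number, φ : ℕ → ℝ⁺ monotone decreasing tending to zero, and 0 < s ≤ 1. For each k let q_{k,s} be an integer m with q_k ≤ m < q_{k+1} minimizing q_k·(φ(q_k) + ((m − q_k)/q_k)·‖q_kθ‖)^s + Σ_{n=m+1}^{q_{k+1}−1} φ(n)^s. If Σ_{k=0}^∞ [ q_k·(φ(q_k) + ((q_{k,s} − q_k)/q_k)·‖q_kθ‖)^s + Σ_{n=q_{k,s}+1}^{q_{k+1}−1} φ(n)^s ] < ∞, then the Hausdorff dimension of E_φ(θ) is at most s. -/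
open Filter

/-- The distance from `x` to the nearest integer, `‖x‖`. -/
noncomputable def nint (x : ℝ) : ℝ := |x - round x|

/-- `qden θ k` is the denominator `q_k` of the `k`-th principal convergent of the
continued fraction expansion of `θ`. -/
noncomputable def qden (θ : ℝ) (k : ℕ) : ℕ := ⌊(GenContFract.of θ).dens k⌋₊

/-- `E_φ(θ)`, the set of points approximated by the irrational rotation `θ`
with respect to the error function `φ`. -/
def Eset (θ : ℝ) (φ : ℕ → ℝ) : Set ℝ :=
  {y : ℝ | {n : ℕ | nint ((n : ℝ) * θ - y) < φ n}.Infinite}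

/-- The quantity `q_k (φ(q_k) + ((m - q_k)/q_k) ‖q_k θ‖)^s + ∑_{n=m+1}^{q_{k+1}-1} φ(n)^s`
minimized in the choice of `q_{k,s}`. -/
noncomputable def cost (θ : ℝ) (φ : ℕ → ℝ) (s : ℝ) (k m : ℕ) : ℝ :=
  (qden θ k : ℝ) *
      (φ (qden θ k) +
        (((m : ℝ) - (qden θ k : ℝ)) / (qden θ k : ℝ)) * nint ((qden θ k : ℝ) * θ)) ^ s +
    ∑ n ∈ Finset.Ico (m + 1) (qden θ (k + 1)), φ n ^ s

/-- The `k`-th block sum `∑_{n=q_k}^{q_{k+1}-1} min (φ(n)^s, ‖q_k θ‖)` appearing in the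
mass transference lower bound. -/
noncomputable def minSum (θ : ℝ) (φ : ℕ → ℝ) (s : ℝ) (k : ℕ) : ℝ :=
  ∑ n ∈ Finset.Ico (qden θ k) (qden θ (k + 1)),
    min (φ n ^ s) (nint ((qden θ k : ℝ) * θ))

section Aux

open MeasureTheory
open scoped ENNReal NNReal

/-- Center of a covering interval: `mθ` shifted by an integer near `⌊mθ⌋ - a`. -/
noncomputable def ctr (θ : ℝ) (a : ℤ) (m : ℕ) (u : Fin 4) : ℝ :=
  (m : ℝ) * θ - ((⌊(m : ℝ) * θ⌋ - a - 2 + ((u : ℕ) : ℤ) : ℤ) : ℝ)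

lemma mem_ctr_ball (θ : ℝ) (a : ℤ) (m : ℕ) (y ρ : ℝ) (hρ1 : ρ ≤ 1)
    (hy1 : (a : ℝ) ≤ y) (hy2 : y ≤ (a : ℝ) + 1) (j : ℤ)
    (h : |(m : ℝ) * θ - (j : ℝ) - y| ≤ ρ) :
    ∃ u : Fin 4, y ∈ Metric.closedBall (ctr θ a m u) ρ := by
  set x := (m : ℝ) * θ with hx
  have h' := abs_le.1 h
  have hf1 : (⌊x⌋ : ℝ) ≤ x := Int.floor_le x
  have hf2 : x < ⌊x⌋ + 1 := Int.lt_floor_add_one x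
  have hjl : ⌊x⌋ - a - 2 ≤ j := by
    have : ((⌊x⌋ - a - 2 : ℤ) : ℝ) ≤ (j : ℝ) := by push_cast; linarith
    exact_mod_cast this
  have hju : j < ⌊x⌋ - a + 2 := by
    have : (j : ℝ) < ((⌊x⌋ - a + 2 : ℤ) : ℝ) := by push_cast; linarith
    exact_mod_cast this
  refine ⟨⟨(j - (⌊x⌋ - a - 2)).toNat, by omega⟩, ?_⟩
  have hj : (⌊x⌋ - a - 2 + (((j - (⌊x⌋ - a - 2)).toNat : ℕ) : ℤ) : ℤ) = j := by omega
  simp only [ctr, Fin.val_mk, ← hx, hj]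
  rw [Metric.mem_closedBall, Real.dist_eq]
  have : y - (x - (j : ℝ)) = -(x - (j : ℝ) - y) := by ring
  rw [this, abs_neg]
  exact h

/-- The covering sets used in the upper-bound proof. -/
noncomputable def TPiece (θ : ℝ) (a : ℤ) (q Q : ℕ → ℕ) (R ψ : ℕ → ℝ) (K : ℕ)
    (p : ℕ × ℕ × Fin 4) : Set ℝ :=
  if K ≤ p.1 then
    if p.2.1 < q p.1 then
      Metric.closedBall (ctr θ a (q p.1 + p.2.1) p.2.2) (R p.1)
    else if Q p.1 + (p.2.1 - q p.1) + 1 < q (p.1 + 1) then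
      Metric.closedBall (ctr θ a (Q p.1 + (p.2.1 - q p.1) + 1) p.2.2)
        (ψ (Q p.1 + (p.2.1 - q p.1) + 1))
    else ∅
  else ∅

lemma ediam_closedBall_le (x ρ : ℝ) :
    EMetric.diam (Metric.closedBall x ρ) ≤ ENNReal.ofReal (2 * ρ) := by
  refine Metric.ediam_le_of_forall_dist_le fun p hp q hq => ?_
  have h1 := Metric.mem_closedBall.1 hp
  have h2 := Metric.mem_closedBall.1 hq
  calc dist p q ≤ dist p x + dist q x := dist_triangle_right p q x
    _ ≤ 2 * ρ := by linarith

end Aux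

open MeasureTheory
open scoped ENNReal NNReal

/-- Upper bound part of Theorem 1.1: if the series converges for `s`, then
`dimH E_φ(θ) ≤ s`. -/
theorem dimH_Eset_le (θ : ℝ) (hθ : Irrational θ) (φ : ℕ → ℝ)
    (hφpos : ∀ n, 0 < φ n) (hφanti : Antitone φ)
    (hφ0 : Tendsto φ atTop (nhds 0))
    (s : ℝ) (hs0 : 0 < s) (hs1 : s ≤ 1)
    (Q : ℕ → ℕ)
    (hQmem : ∀ k, qden θ k ≤ Q k ∧ Q k < qden θ (k + 1))
    (hQmin : ∀ k, ∀ m, qden θ k ≤ m → m < qden θ (k + 1) →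
      cost θ φ s k (Q k) ≤ cost θ φ s k m)
    (hsum : Summable fun k => cost θ φ s k (Q k)) :
    dimH (Eset θ φ) ≤ ENNReal.ofReal s := by
  classical
  set q : ℕ → ℕ := qden θ with hqdef
  set R : ℕ → ℝ := fun k => φ (q k) + (((Q k : ℝ) - (q k : ℝ)) / (q k : ℝ)) * nint ((q k : ℝ) * θ)
    with hRdef
  set c : ℕ → ℝ := fun k => cost θ φ s k (Q k) with hcdef
  have hnint_nonneg : ∀ x : ℝ, 0 ≤ nint x := fun x => abs_nonneg _
  have hcR : ∀ k, c k = (q k : ℝ) * R k ^ s + ∑ n ∈ Finset.Ico (Q k + 1) (q (k + 1)), φ n ^ s := by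
    intro k; rfl
  have hQ1 : ∀ k, q k ≤ Q k := fun k => (hQmem k).1
  have hQ2 : ∀ k, Q k < q (k + 1) := fun k => (hQmem k).2
  have hq_lt : ∀ k, q k < q (k + 1) := fun k => lt_of_le_of_lt (hQ1 k) (hQ2 k)
  have hqmono : StrictMono q := strictMono_nat_of_lt_succ hq_lt
  have hRpos : ∀ k, 0 < R k := by
    intro k
    have h2 : 0 ≤ (((Q k : ℝ) - (q k : ℝ)) / (q k : ℝ)) * nint ((q k : ℝ) * θ) := by
      apply mul_nonneg (div_nonneg _ (Nat.cast_nonneg _)) (hnint_nonneg _)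
      have := hQ1 k
      have : (q k : ℝ) ≤ (Q k : ℝ) := by exact_mod_cast this
      linarith
    have := hφpos (q k)
    simp only [hRdef]
    linarith
  have hφR : ∀ k, φ (q k) ≤ R k := by
    intro k
    have := hRpos k
    have h2 : 0 ≤ (((Q k : ℝ) - (q k : ℝ)) / (q k : ℝ)) * nint ((q k : ℝ) * θ) := by
      apply mul_nonneg (div_nonneg _ (Nat.cast_nonneg _)) (hnint_nonneg _)
      have h3 : (q k : ℝ) ≤ (Q k : ℝ) := by exact_mod_cast hQ1 k
      linarith
    simp only [hRdef]; linarith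
  have hsum_nonneg : ∀ k, 0 ≤ ∑ n ∈ Finset.Ico (Q k + 1) (q (k + 1)), φ n ^ s := by
    intro k
    exact Finset.sum_nonneg fun n _ => Real.rpow_nonneg (hφpos n).le s
  have hc_nonneg : ∀ k, 0 ≤ c k := by
    intro k
    rw [hcR k]
    have := hsum_nonneg k
    have h1 : (0:ℝ) ≤ (q k : ℝ) * R k ^ s :=
      mul_nonneg (Nat.cast_nonneg _) (Real.rpow_nonneg (hRpos k).le s)
    linarith
  have hRc : ∀ k, 1 ≤ q k → R k ^ s ≤ c k := by
    intro k hk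
    rw [hcR k]
    have h1 : (1 : ℝ) ≤ (q k : ℝ) := by exact_mod_cast hk
    have h2 : 0 ≤ R k ^ s := Real.rpow_nonneg (hRpos k).le s
    nlinarith [hsum_nonneg k]
  -- tails
  set T : ℕ → ℝ := fun K => ∑' j, c (j + K) with hTdef
  have hsummable_tail : ∀ K, Summable fun j => c (j + K) := fun K =>
    (summable_nat_add_iff K).2 hsum
  have hT0 : ∀ K, 0 ≤ T K := fun K => tsum_nonneg fun j => hc_nonneg _
  have hcT : ∀ K k, K ≤ k → c k ≤ T K := by
    intro K k hKk
    have : c k = c ((k - K) + K) := by congr 1; omega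
    rw [this]
    exact Summable.le_tsum (hsummable_tail K) (k - K) fun j _ => hc_nonneg _
  have hTtendsto : Tendsto T atTop (nhds 0) := tendsto_sum_nat_add c
  have hRT : ∀ K k, K ≤ k → 1 ≤ K → R k ≤ T K ^ s⁻¹ := by
    intro K k hKk hK1
    have hqk1 : 1 ≤ q k := by
      have h1 : K ≤ q K := hqmono.le_apply
      have h2 : q K ≤ q k := hqmono.monotone hKk
      omega
    have h1 : R k ^ s ≤ c k := hRc k hqk1
    have h2 : c k ≤ T K := hcT K k hKk
    calc R k = (R k ^ s) ^ s⁻¹ := (Real.rpow_rpow_inv (hRpos k).le hs0.ne').symm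
      _ ≤ (T K) ^ s⁻¹ := Real.rpow_le_rpow (Real.rpow_nonneg (hRpos k).le s) (h1.trans h2)
          (inv_nonneg.2 hs0.le)
  -- main step: each unit interval piece has zero s-Hausdorff measure
  have key : ∀ a : ℤ, μH[s] (Eset θ φ ∩ Set.Icc (a : ℝ) ((a : ℝ) + 1)) = 0 := by
    intro a
    set t : ℕ → ℕ × ℕ × Fin 4 → Set ℝ := TPiece θ a q Q R φ with htdef
    set r : ℕ → ℝ≥0∞ := fun K => ENNReal.ofReal (2 * T K ^ s⁻¹) with hrdef
    have hr : Tendsto r atTop (nhds 0) := by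
      have h1 : Tendsto (fun K => T K ^ s⁻¹) atTop (nhds 0) := by
        have := hTtendsto.rpow_const (p := s⁻¹) (Or.inr (inv_nonneg.2 hs0.le))
        rwa [Real.zero_rpow (inv_ne_zero hs0.ne')] at this
      have h2 : Tendsto (fun K => 2 * T K ^ s⁻¹) atTop (nhds 0) := by
        have := h1.const_mul (2:ℝ)
        simpa using this
      have h3 := (ENNReal.continuous_ofReal.tendsto 0).comp h2
      rw [ENNReal.ofReal_zero] at h3
      exact h3
    -- diameters
    have ht : ∀ᶠ K in atTop, ∀ p, EMetric.diam (t K p) ≤ r K := by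
      filter_upwards [eventually_ge_atTop 1] with K hK1
      rintro ⟨k, i, u⟩
      by_cases hKk : K ≤ k
      · have hbound : ∀ m (ρ : ℝ), ρ ≤ T K ^ s⁻¹ →
            EMetric.diam (Metric.closedBall (ctr θ a m u) ρ) ≤ r K := by
          intro m ρ hρ
          refine le_trans (ediam_closedBall_le _ _) (ENNReal.ofReal_le_ofReal ?_)
          linarith
        simp only [htdef, TPiece, if_pos hKk]
        by_cases hi : i < q k
        · rw [if_pos hi]
          exact hbound _ _ (hRT K k hKk hK1)
        · rw [if_neg hi]
          by_cases h2 : Q k + (i - q k) + 1 < q (k + 1)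
          · rw [if_pos h2]
            refine hbound _ _ ?_
            have hn : q k ≤ Q k + (i - q k) + 1 := by have := hQ1 k; omega
            calc φ (Q k + (i - q k) + 1) ≤ φ (q k) := hφanti hn
              _ ≤ R k := hφR k
              _ ≤ T K ^ s⁻¹ := hRT K k hKk hK1
          · rw [if_neg h2]; simp [EMetric.diam]
      · simp [htdef, TPiece, hKk, EMetric.diam]
    -- coverage
    have hst : ∀ᶠ K in atTop,
        Eset θ φ ∩ Set.Icc (a : ℝ) ((a : ℝ) + 1) ⊆ ⋃ p, t K p := by
      have hev : ∀ᶠ K in atTop, T K ≤ 1 := by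
        have := hTtendsto.eventually (eventually_le_nhds (by norm_num : (0:ℝ) < 1))
        exact this
      filter_upwards [eventually_ge_atTop 1, hev] with K hK1 hTK1
      rintro y ⟨hyE, hya, hyb⟩
      obtain ⟨n, hnS, hnK⟩ := hyE.exists_gt (q K)
      have hqKn : q K ≤ n := hnK.le
      -- find the block containing n
      have hex : ∃ j, n < q j := ⟨n + 1, lt_of_lt_of_le (Nat.lt_succ_self n) hqmono.le_apply⟩
      set j₀ := Nat.find hex with hj₀def
      have hj₀ : n < q j₀ := Nat.find_spec hex
      have hKj₀ : K < j₀ := by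
        by_contra hcon
        push_neg at hcon
        have : q j₀ ≤ q K := hqmono.monotone hcon
        omega
      set k := j₀ - 1 with hkdef
      have hk1 : j₀ = k + 1 := by omega
      have hKk : K ≤ k := by omega
      have hqn : q k ≤ n := by
        by_contra hcon
        push_neg at hcon
        exact Nat.find_min hex (show k < j₀ by omega) hcon
      have hnq : n < q (k + 1) := by rw [← hk1]; exact hj₀
      have hqk1 : 1 ≤ q k := by
        have h1 : K ≤ q K := hqmono.le_apply
        have h2 : q K ≤ q k := hqmono.monotone hKk
        omega
      have hRk1 : R k ≤ 1 := by
        calc R k ≤ T K ^ s⁻¹ := hRT K k hKk hK1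
          _ ≤ 1 := Real.rpow_le_one (hT0 K) hTK1 (inv_nonneg.2 hs0.le)
      -- membership data for n
      have hnS' : nint ((n : ℝ) * θ - y) < φ n := hnS
      set j' := round ((n : ℝ) * θ - y) with hj'def
      have habs : |(n : ℝ) * θ - (j' : ℝ) - y| < φ n := by
        have h1 : (n : ℝ) * θ - y - (j' : ℝ) = (n : ℝ) * θ - (j' : ℝ) - y := by ring
        have := hnS'
        rw [show nint ((n : ℝ) * θ - y) = |(n : ℝ) * θ - y - (j' : ℝ)| from rfl] at this
        rwa [h1] at this
      rw [Set.mem_iUnion]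
      by_cases hcase : n ≤ Q k
      · -- merged piece
        set b := q k with hbdef
        set i := (n - b) % b with hidef
        set tq := (n - b) / b with htqdef
        have hi : i < b := Nat.mod_lt _ (by omega)
        have hdm : b * tq + i = n - b := Nat.div_add_mod (n - b) b
        have hnr : n = (b + i) + b * tq := by omega
        set P := round ((b : ℝ) * θ) with hPdef
        set j'' : ℤ := j' - (tq : ℤ) * P with hj''def
        have hxeq : ((b + i : ℕ) : ℝ) * θ - (j'' : ℝ) - y =
            ((n : ℝ) * θ - (j' : ℝ) - y) - (tq : ℝ) * ((b : ℝ) * θ - (P : ℝ)) := by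
          have hn' : (n : ℝ) = ((b : ℝ) + (i : ℝ)) + (b : ℝ) * (tq : ℝ) := by
            exact_mod_cast congrArg (Nat.cast : ℕ → ℝ) hnr
          push_cast
          push_cast at hn'
          rw [hn']
          simp only [hj''def, Int.cast_sub, Int.cast_mul, Int.cast_natCast]
          ring
        have htqb : (tq : ℝ) ≤ ((Q k : ℝ) - (b : ℝ)) / (b : ℝ) := by
          have h1 : b * tq + b ≤ Q k := by omega
          have h2 : (b : ℝ) * (tq : ℝ) + (b : ℝ) ≤ (Q k : ℝ) := by exact_mod_cast h1
          rw [le_div_iff₀ (by exact_mod_cast hqk1 : (0:ℝ) < (b:ℝ))]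
          linarith [mul_comm (tq : ℝ) (b : ℝ)]
        have hkey : |((b + i : ℕ) : ℝ) * θ - (j'' : ℝ) - y| ≤ R k := by
          rw [hxeq]
          have h1 : |((n : ℝ) * θ - (j' : ℝ) - y) - (tq : ℝ) * ((b : ℝ) * θ - (P : ℝ))| ≤
              |(n : ℝ) * θ - (j' : ℝ) - y| + (tq : ℝ) * |(b : ℝ) * θ - (P : ℝ)| := by
            calc _ ≤ |(n : ℝ) * θ - (j' : ℝ) - y| + |(tq : ℝ) * ((b : ℝ) * θ - (P : ℝ))| :=
                abs_sub _ _
              _ = _ := by rw [abs_mul, Nat.abs_cast]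
          have h2 : |(b : ℝ) * θ - (P : ℝ)| = nint ((b : ℝ) * θ) := rfl
          have h3 : (tq : ℝ) * |(b : ℝ) * θ - (P : ℝ)| ≤
              (((Q k : ℝ) - (b : ℝ)) / (b : ℝ)) * nint ((b : ℝ) * θ) := by
            rw [h2]
            exact mul_le_mul_of_nonneg_right htqb (hnint_nonneg _)
          have h4 : φ n ≤ φ b := hφanti hqn
          have h5 : R k = φ b + (((Q k : ℝ) - (b : ℝ)) / (b : ℝ)) * nint ((b : ℝ) * θ) := rfl
          rw [h5]
          calc _ ≤ |(n : ℝ) * θ - (j' : ℝ) - y| + (tq : ℝ) * |(b : ℝ) * θ - (P : ℝ)| := h1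
            _ ≤ φ n + (((Q k : ℝ) - (b : ℝ)) / (b : ℝ)) * nint ((b : ℝ) * θ) := by
                linarith [habs.le]
            _ ≤ _ := by linarith
        obtain ⟨u, hu⟩ := mem_ctr_ball θ a (b + i) y (R k) hRk1 hya hyb j'' hkey
        refine ⟨(k, i, u), ?_⟩
        simp only [htdef, TPiece, if_pos hKk, if_pos (show i < q k from hi)]
        exact hu
      · -- individual piece
        push_neg at hcase
        set i := q k + (n - (Q k + 1)) with hidef
        have hni : ¬ (i < q k) := by omega
        have hival : Q k + (i - q k) + 1 = n := by omega
        have hcond : Q k + (i - q k) + 1 < q (k + 1) := by rw [hival]; exact hnq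
        have hφn1 : φ n ≤ 1 := by
          calc φ n ≤ φ (q k) := hφanti hqn
            _ ≤ R k := hφR k
            _ ≤ 1 := hRk1
        obtain ⟨u, hu⟩ := mem_ctr_ball θ a n y (φ n) hφn1 hya hyb j' habs.le
        refine ⟨(k, i, u), ?_⟩
        simp only [htdef, TPiece, if_pos hKk, if_neg hni, if_pos hcond]
        rw [hival]
        exact hu
    -- the measure bound
    have hmeas := Measure.hausdorffMeasure_le_liminf_tsum s
      (Eset θ φ ∩ Set.Icc (a : ℝ) ((a : ℝ) + 1)) r hr t ht hst
    -- bound the sums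
    have hsumbound : ∀ K, (∑' p : ℕ × ℕ × Fin 4, EMetric.diam (t K p) ^ s)
        ≤ ENNReal.ofReal (8 * T K) := by
      intro K
      set g : ℕ → ℕ → ℝ≥0∞ := fun k i =>
        if i < q k then ENNReal.ofReal ((2 * R k) ^ s)
        else if Q k + (i - q k) + 1 < q (k + 1) then
          ENNReal.ofReal ((2 * φ (Q k + (i - q k) + 1)) ^ s)
        else 0 with hgdef
      -- pointwise bound on pieces
      have hptwise : ∀ k i (u : Fin 4),
          EMetric.diam (t K (k, i, u)) ^ s ≤ if K ≤ k then g k i else 0 := by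
        intro k i u
        by_cases hKk : K ≤ k
        · rw [if_pos hKk]
          simp only [htdef, TPiece, if_pos hKk, hgdef]
          by_cases hi : i < q k
          · rw [if_pos hi, if_pos hi]
            calc EMetric.diam (Metric.closedBall (ctr θ a (q k + i) u) (R k)) ^ s
                ≤ ENNReal.ofReal (2 * R k) ^ s :=
                  ENNReal.rpow_le_rpow (ediam_closedBall_le _ _) hs0.le
              _ = ENNReal.ofReal ((2 * R k) ^ s) :=
                  ENNReal.ofReal_rpow_of_nonneg (by linarith [hRpos k]) hs0.le
          · rw [if_neg hi, if_neg hi]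
            by_cases h2 : Q k + (i - q k) + 1 < q (k + 1)
            · rw [if_pos h2, if_pos h2]
              calc EMetric.diam (Metric.closedBall (ctr θ a (Q k + (i - q k) + 1) u)
                    (φ (Q k + (i - q k) + 1))) ^ s
                  ≤ ENNReal.ofReal (2 * φ (Q k + (i - q k) + 1)) ^ s :=
                    ENNReal.rpow_le_rpow (ediam_closedBall_le _ _) hs0.le
                _ = ENNReal.ofReal ((2 * φ (Q k + (i - q k) + 1)) ^ s) :=
                    ENNReal.ofReal_rpow_of_nonneg (by linarith [hφpos (Q k + (i - q k) + 1)])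
                      hs0.le
            · rw [if_neg h2, if_neg h2]
              simp [ENNReal.zero_rpow_of_pos hs0, EMetric.diam]
        · rw [if_neg hKk]
          simp only [htdef, TPiece, if_neg hKk]
          simp [ENNReal.zero_rpow_of_pos hs0, EMetric.diam]
      -- sum of g over i
      have hgsum : ∀ k, (∑' i, g k i) ≤ ENNReal.ofReal (2 * c k) := by
        intro k
        set N : ℕ := q k + (q (k + 1) - (Q k + 1)) with hNdef
        set M : ℕ := q (k + 1) - (Q k + 1) with hMdef
        have hQk := hQ2 k
        have h1 : (∑' i, g k i) = ∑ i ∈ Finset.range N, g k i := by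
          refine tsum_eq_sum fun i hi => ?_
          rw [Finset.mem_range, not_lt] at hi
          rw [hgdef]
          simp only
          rw [if_neg (by omega), if_neg (by omega)]
        have h2 : ∑ i ∈ Finset.range (q k), g k i
            = (q k : ℝ≥0∞) * ENNReal.ofReal ((2 * R k) ^ s) := by
          rw [Finset.sum_congr rfl fun i hi => ?_, Finset.sum_const, Finset.card_range,
            nsmul_eq_mul]
          rw [hgdef]
          simp only
          rw [if_pos (Finset.mem_range.1 hi)]
        have h3 : ∑ i ∈ Finset.Ico (q k) N, g k i
            = ∑ j ∈ Finset.range M, ENNReal.ofReal ((2 * φ (Q k + 1 + j)) ^ s) := by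
          rw [Finset.sum_Ico_eq_sum_range]
          have hNM : N - q k = M := by omega
          rw [hNM]
          refine Finset.sum_congr rfl fun j hj => ?_
          rw [Finset.mem_range] at hj
          have hidx : Q k + (q k + j - q k) + 1 = Q k + 1 + j := by omega
          rw [hgdef]
          simp only
          rw [if_neg (by omega), hidx, if_pos (by omega)]
        have h4 : (∑' i, g k i) = (q k : ℝ≥0∞) * ENNReal.ofReal ((2 * R k) ^ s)
            + ∑ j ∈ Finset.range M, ENNReal.ofReal ((2 * φ (Q k + 1 + j)) ^ s) := by
          rw [h1, ← h2, ← h3, Finset.range_eq_Ico, Finset.range_eq_Ico]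
          exact (Finset.sum_Ico_consecutive (g k) (Nat.zero_le (q k)) (show q k ≤ N by omega)).symm
        rw [h4]
        -- real elementary bounds
        have h2s : (2 : ℝ) ^ s ≤ 2 := by
          calc (2:ℝ) ^ s ≤ 2 ^ (1:ℝ) := Real.rpow_le_rpow_of_exponent_le one_le_two hs1
            _ = 2 := Real.rpow_one 2
        have h2R : (2 * R k) ^ s ≤ 2 * R k ^ s := by
          rw [Real.mul_rpow (by norm_num) (hRpos k).le]
          exact mul_le_mul_of_nonneg_right h2s (Real.rpow_nonneg (hRpos k).le s)
        have h2φ : ∀ n, (2 * φ n) ^ s ≤ 2 * φ n ^ s := by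
          intro n
          rw [Real.mul_rpow (by norm_num) (hφpos n).le]
          exact mul_le_mul_of_nonneg_right h2s (Real.rpow_nonneg (hφpos n).le s)
        have hck : 2 * c k = (q k : ℝ) * (2 * R k ^ s)
            + ∑ j ∈ Finset.range M, 2 * φ (Q k + 1 + j) ^ s := by
          rw [hcR k, Finset.sum_Ico_eq_sum_range]
          have : q (k + 1) - (Q k + 1) = M := rfl
          rw [this, ← Finset.mul_sum]
          ring
        have hRs : (0:ℝ) ≤ 2 * R k ^ s :=
          mul_nonneg (by norm_num) (Real.rpow_nonneg (hRpos k).le s)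
        have hφs : ∀ n, (0:ℝ) ≤ 2 * φ n ^ s := fun n =>
          mul_nonneg (by norm_num) (Real.rpow_nonneg (hφpos n).le s)
        calc (q k : ℝ≥0∞) * ENNReal.ofReal ((2 * R k) ^ s)
              + ∑ j ∈ Finset.range M, ENNReal.ofReal ((2 * φ (Q k + 1 + j)) ^ s)
            ≤ (q k : ℝ≥0∞) * ENNReal.ofReal (2 * R k ^ s)
              + ∑ j ∈ Finset.range M, ENNReal.ofReal (2 * φ (Q k + 1 + j) ^ s) :=
              add_le_add (mul_le_mul_right (ENNReal.ofReal_le_ofReal h2R) _)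
                (Finset.sum_le_sum fun j _ => ENNReal.ofReal_le_ofReal (h2φ _))
          _ = ENNReal.ofReal ((q k : ℝ) * (2 * R k ^ s))
              + ENNReal.ofReal (∑ j ∈ Finset.range M, 2 * φ (Q k + 1 + j) ^ s) := by
              rw [← ENNReal.ofReal_natCast (q k),
                ← ENNReal.ofReal_mul (Nat.cast_nonneg _),
                ENNReal.ofReal_sum_of_nonneg fun j _ => hφs _]
          _ = ENNReal.ofReal (2 * c k) := by
              rw [← ENNReal.ofReal_add (mul_nonneg (Nat.cast_nonneg _) hRs)
                (Finset.sum_nonneg fun j _ => hφs _), hck]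
      -- assemble
      have hstep : (∑' p : ℕ × ℕ × Fin 4, EMetric.diam (t K p) ^ s)
          ≤ ∑' k, (if K ≤ k then ENNReal.ofReal (8 * c k) else 0) := by
        rw [ENNReal.tsum_prod']
        refine ENNReal.tsum_le_tsum fun k => ?_
        rw [ENNReal.tsum_prod']
        have hfin : ∀ x : ℝ≥0∞, (∑' _ : Fin 4, x) = 4 * x := fun x => by
          simp [tsum_fintype, Finset.sum_const]
        have hin : ∀ i, (∑' u : Fin 4, EMetric.diam (t K (k, i, u)) ^ s)
            ≤ 4 * (if K ≤ k then g k i else 0) := by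
          intro i
          calc (∑' u : Fin 4, EMetric.diam (t K (k, i, u)) ^ s)
              ≤ ∑' _ : Fin 4, (if K ≤ k then g k i else 0) :=
                ENNReal.tsum_le_tsum fun u => hptwise k i u
            _ = 4 * (if K ≤ k then g k i else 0) := hfin _
        calc (∑' i, ∑' u : Fin 4, EMetric.diam (t K (k, i, u)) ^ s)
            ≤ ∑' i, 4 * (if K ≤ k then g k i else 0) := ENNReal.tsum_le_tsum hin
          _ = 4 * ∑' i, (if K ≤ k then g k i else 0) := ENNReal.tsum_mul_left
          _ ≤ if K ≤ k then ENNReal.ofReal (8 * c k) else 0 := by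
              by_cases hKk : K ≤ k
              · simp only [if_pos hKk]
                calc (4 : ℝ≥0∞) * ∑' i, g k i ≤ 4 * ENNReal.ofReal (2 * c k) := by
                      gcongr
                      exact hgsum k
                  _ = ENNReal.ofReal (8 * c k) := by
                      rw [show (4 : ℝ≥0∞) = ENNReal.ofReal (4:ℝ) by
                          rw [ENNReal.ofReal_ofNat],
                        ← ENNReal.ofReal_mul (by norm_num)]
                      norm_num
                      ring_nf
              · simp [hKk]
        done
      refine hstep.trans ?_
      have hshift : (∑' k, (if K ≤ k then ENNReal.ofReal (8 * c k) else 0))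
          = ∑' j, ENNReal.ofReal (8 * c (j + K)) := by
        rw [← (add_left_injective K).tsum_eq
          (f := fun k => if K ≤ k then ENNReal.ofReal (8 * c k) else 0) ?_]
        · refine tsum_congr fun j => ?_
          rw [if_pos (Nat.le_add_left K j)]
        · intro k hk
          rw [Function.mem_support] at hk
          by_cases hKk : K ≤ k
          · exact ⟨k - K, by simp; omega⟩
          · rw [if_neg hKk] at hk; exact absurd rfl hk
      rw [hshift]
      rw [← ENNReal.ofReal_tsum_of_nonneg (fun j => mul_nonneg (by norm_num) (hc_nonneg _))
        (((hsummable_tail K).mul_left 8))]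
      refine ENNReal.ofReal_le_ofReal ?_
      rw [tsum_mul_left]
    have hlim : liminf (fun K => ∑' p : ℕ × ℕ × Fin 4, EMetric.diam (t K p) ^ s) atTop = 0 := by
      have h1 : Tendsto (fun K => ENNReal.ofReal (8 * T K)) atTop (nhds 0) := by
        have h2 : Tendsto (fun K => 8 * T K) atTop (nhds 0) := by
          have := hTtendsto.const_mul (8:ℝ)
          simpa using this
        have h3 := (ENNReal.continuous_ofReal.tendsto 0).comp h2
        rw [ENNReal.ofReal_zero] at h3
        exact h3
      have h4 : liminf (fun K => ENNReal.ofReal (8 * T K)) atTop = 0 := h1.liminf_eq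
      refine le_antisymm ?_ bot_le
      rw [← h4]
      exact liminf_le_liminf (Eventually.of_forall hsumbound)
    have hlim' : liminf (fun K => ∑' p : ℕ × ℕ × Fin 4, Metric.ediam (t K p) ^ s) atTop = 0 := hlim
    rw [hlim'] at hmeas
    exact le_antisymm hmeas bot_le
  -- conclude
  have hsub : Eset θ φ ⊆ ⋃ a : ℤ, Eset θ φ ∩ Set.Icc (a : ℝ) ((a : ℝ) + 1) := by
    intro y hy
    rw [Set.mem_iUnion]
    exact ⟨⌊y⌋, hy, Int.floor_le y, (Int.lt_floor_add_one y).le⟩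
  calc dimH (Eset θ φ) ≤ dimH (⋃ a : ℤ, Eset θ φ ∩ Set.Icc (a : ℝ) ((a : ℝ) + 1)) :=
      dimH_mono hsub
    _ = ⨆ a : ℤ, dimH (Eset θ φ ∩ Set.Icc (a : ℝ) ((a : ℝ) + 1)) := dimH_iUnion _
    _ ≤ ENNReal.ofReal s := by
        refine iSup_le fun a => ?_
        have h1 : μH[((s.toNNReal : ℝ≥0) : ℝ)] (Eset θ φ ∩ Set.Icc (a : ℝ) ((a : ℝ) + 1)) ≠ ⊤ := by
          rw [Real.coe_toNNReal s hs0.le, key a]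
          exact ENNReal.zero_ne_top
        exact dimH_le_of_hausdorffMeasure_ne_top h1
end

section
/- Let θ be an irrational number whose continued fraction partial quotients satisfy a_{k+1} = q_k², where {q_k} are the convergent denominators of θ, and define φ : ℕ → ℝ⁺ by φ(n) = 1/(2 q_k³) for each n ∈ (q_{k−1}², q_k²]. Then the series Σ_{k=0}^∞ Σ_{n=q_k}^{q_{k+1}−1} min{ φ(n)^s, ‖q_kθ‖ } converges for every s with 1/3 < s < 1 and diverges for every s with 0 < s < 1/3; consequently inf{ s ≥ 0 : Σ_{k=0}^∞ Σ_{n=q_k}^{q_{k+1}−1} min{ φ(n)^s, ‖q_kθ‖ } < ∞ } = 1/3. -/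
open Filter GenContFract

lemma nint_nonneg (x : ℝ) : 0 ≤ nint x := abs_nonneg _

lemma nint_le_half (x : ℝ) : nint x ≤ 1/2 := abs_sub_round x

lemma nint_le_abs_sub_int (x : ℝ) (m : ℤ) : nint x ≤ |x - m| := by
  rw [nint, abs_sub_round_eq_min]
  rcases le_or_gt m ⌊x⌋ with h | h
  · have h1 : (m : ℝ) ≤ ⌊x⌋ := by exact_mod_cast h
    have h2 : Int.fract x ≤ x - m := by
      have := Int.floor_le x
      simp only [Int.fract]; linarith
    calc min (Int.fract x) (1 - Int.fract x) ≤ Int.fract x := min_le_left _ _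
      _ ≤ x - m := h2
      _ ≤ |x - m| := le_abs_self _
  · have h1 : (⌊x⌋ : ℝ) + 1 ≤ m := by exact_mod_cast h
    have h2 : 1 - Int.fract x ≤ m - x := by
      simp only [Int.fract]; linarith
    calc min (Int.fract x) (1 - Int.fract x) ≤ 1 - Int.fract x := min_le_right _ _
      _ ≤ m - x := h2
      _ ≤ |x - m| := by rw [abs_sub_comm]; exact le_abs_self _

lemma round_eq_of_abs_sub_lt_half {x : ℝ} {m : ℤ} (h : |x - m| < 1/2) : round x = m := by
  have hx : x = (m : ℝ) + (x - m) := by ring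
  rw [hx, round_intCast_add, round_eq_zero_iff.2 ?_, add_zero]
  rcases abs_lt.1 h with ⟨h1, h2⟩
  exact ⟨le_of_lt h1, h2⟩

lemma nint_eq_of_abs_sub_lt_half {x : ℝ} {m : ℤ} (h : |x - m| < 1/2) : nint x = |x - m| := by
  rw [nint, round_eq_of_abs_sub_lt_half h]




section
variable {θ : ℝ}

lemma not_term (hθ : Irrational θ) : ∀ n, ¬(GenContFract.of θ).TerminatedAt n := by
  intro n hn
  obtain ⟨q, hq⟩ := (terminates_iff_rat θ).1 ⟨n, hn⟩
  exact hθ ⟨q, hq.symm⟩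

lemma s_get (ha : ∀ k, (GenContFract.of θ).partDens.get? k = some ((qden θ k : ℝ) ^ 2)) (k : ℕ) :
    ∃ gp : Pair ℝ, (GenContFract.of θ).s.get? k = some gp ∧ gp.a = 1 ∧
      gp.b = ((qden θ k : ℝ) ^ 2) := by
  obtain ⟨gp, hgp, hb⟩ := exists_s_b_of_partDen (ha k)
  exact ⟨gp, hgp, of_partNum_eq_one (partNum_eq_s_a hgp), hb⟩

lemma qden_zero : qden θ 0 = 1 := by simp [qden, zeroth_den_eq_one]

lemma dens_eq (ha : ∀ k, (GenContFract.of θ).partDens.get? k = some ((qden θ k : ℝ) ^ 2)) :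
    ∀ k, (GenContFract.of θ).dens k = (qden θ k : ℝ) := by
  have h1 : (GenContFract.of θ).dens 1 = (qden θ 1 : ℝ) := by
    obtain ⟨gp, hgp, hga, hgb⟩ := s_get ha 0
    have h : (GenContFract.of θ).dens 1 = gp.b := first_den_eq hgp
    rw [hgb, qden_zero] at h
    norm_num at h
    rw [h]; simp [qden, h]
  have key : ∀ k, (GenContFract.of θ).dens k = (qden θ k : ℝ) ∧
      (GenContFract.of θ).dens (k+1) = (qden θ (k+1) : ℝ) := by
    intro k
    induction k with
    | zero => exact ⟨by simp [qden, zeroth_den_eq_one], h1⟩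
    | succ k ih =>
      refine ⟨ih.2, ?_⟩
      obtain ⟨gp, hgp, hga, hgb⟩ := s_get ha (k+1)
      have hrec := dens_recurrence hgp ih.1 ih.2
      rw [hga, hgb] at hrec
      have : (GenContFract.of θ).dens (k+2) =
          (((qden θ (k+1))^2 * (qden θ (k+1)) + qden θ k : ℕ) : ℝ) := by
        rw [hrec]; push_cast; ring
      have h2 : qden θ (k+2) = (qden θ (k+1))^2 * (qden θ (k+1)) + qden θ k := by
        rw [qden, this, Nat.floor_natCast]
      rw [this, h2]
  exact fun k => (key k).1

lemma qden_one (ha : ∀ k, (GenContFract.of θ).partDens.get? k = some ((qden θ k : ℝ) ^ 2)) :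
    qden θ 1 = 1 := by
  obtain ⟨gp, hgp, hga, hgb⟩ := s_get ha 0
  have h : (GenContFract.of θ).dens 1 = gp.b := first_den_eq hgp
  rw [hgb, qden_zero] at h
  norm_num at h
  simp [qden, h]

lemma qden_rec (ha : ∀ k, (GenContFract.of θ).partDens.get? k = some ((qden θ k : ℝ) ^ 2)) (k : ℕ) :
    qden θ (k+2) = (qden θ (k+1))^3 + qden θ k := by
  obtain ⟨gp, hgp, hga, hgb⟩ := s_get ha (k+1)
  have hrec := dens_recurrence hgp (dens_eq ha k) (dens_eq ha (k+1))
  rw [hga, hgb, dens_eq ha (k+2)] at hrec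
  have : ((qden θ (k+2) : ℕ) : ℝ) = (((qden θ (k+1))^3 + qden θ k : ℕ) : ℝ) := by
    rw [hrec]; push_cast; ring
  exact_mod_cast this

lemma nums_int (hθ : Irrational θ)
    (ha : ∀ k, (GenContFract.of θ).partDens.get? k = some ((qden θ k : ℝ) ^ 2)) :
    ∀ k, ∃ m : ℤ, (GenContFract.of θ).nums k = (m : ℝ) := by
  have h0 : (GenContFract.of θ).nums 0 = ((⌊θ⌋ : ℤ) : ℝ) := by
    rw [zeroth_num_eq_h, of_h_eq_floor]
  have h1 : ∃ m : ℤ, (GenContFract.of θ).nums 1 = (m : ℝ) := by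
    obtain ⟨gp, hgp, hga, hgb⟩ := s_get ha 0
    have h : (GenContFract.of θ).nums 1 = gp.b * (GenContFract.of θ).h + gp.a :=
      first_num_eq hgp
    refine ⟨(qden θ 0 : ℤ)^2 * ⌊θ⌋ + 1, ?_⟩
    rw [h, hga, hgb, of_h_eq_floor]; push_cast; ring
  have key : ∀ k, (∃ m : ℤ, (GenContFract.of θ).nums k = (m : ℝ)) ∧
      (∃ m : ℤ, (GenContFract.of θ).nums (k+1) = (m : ℝ)) := by
    intro k
    induction k with
    | zero => exact ⟨⟨⌊θ⌋, h0⟩, h1⟩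
    | succ k ih =>
      refine ⟨ih.2, ?_⟩
      obtain ⟨m, hm⟩ := ih.1
      obtain ⟨m', hm'⟩ := ih.2
      obtain ⟨gp, hgp, hga, hgb⟩ := s_get ha (k+1)
      have hrec := nums_recurrence hgp hm hm'
      refine ⟨(qden θ (k+1) : ℤ)^2 * m' + m, ?_⟩
      rw [hrec, hga, hgb]; push_cast; ring
  exact fun k => (key k).1

end

section
variable {θ : ℝ}


variable (ha : ∀ k, (GenContFract.of θ).partDens.get? k = some ((qden θ k : ℝ) ^ 2))
include ha

lemma qden_pos : ∀ k, 1 ≤ qden θ k := by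
  have key : ∀ k, 1 ≤ qden θ k ∧ 1 ≤ qden θ (k+1) := by
    intro k
    induction k with
    | zero => rw [qden_zero, qden_one ha]; exact ⟨le_refl _, le_refl _⟩

    | succ k ih =>
      refine ⟨ih.2, ?_⟩
      rw [qden_rec ha k]
      exact le_trans ih.1 (Nat.le_add_left _ _)
  exact fun k => (key k).1

lemma qden_mono : Monotone (qden θ) := by
  apply monotone_nat_of_le_succ
  intro k
  match k with
  | 0 => rw [qden_zero, qden_one ha]
  | (k+1) =>
    rw [qden_rec ha k]
    exact le_trans (Nat.le_self_pow (by norm_num) _) (Nat.le_add_right _ _)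

lemma qden_two : qden θ 2 = 2 := by
  have h := qden_rec ha 0
  rw [h, qden_one ha, qden_zero]; norm_num

lemma qden_three : qden θ 3 = 9 := by
  have h := qden_rec ha 1
  rw [h, qden_two ha, qden_one ha]; norm_num

lemma qden_ge2 (k : ℕ) : 2 ≤ qden θ (k+2) := by
  exact le_trans (le_of_eq (qden_two ha).symm) (qden_mono ha (by omega))

lemma qden_ge9 (k : ℕ) : 9 ≤ qden θ (k+3) := by
  exact le_trans (le_of_eq (qden_three ha).symm) (qden_mono ha (by omega))

lemma cube_le (k : ℕ) : (qden θ (k+1))^3 ≤ qden θ (k+2) := by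
  rw [qden_rec ha k]; omega

lemma cube_le' : ∀ k, (qden θ k)^3 ≤ qden θ (k+1) := by
  intro k
  match k with
  | 0 => rw [qden_zero, qden_one ha]; norm_num
  | (k+1) => exact cube_le ha k


lemma sq_succ (k : ℕ) : (qden θ (k+1))^2 + 1 ≤ qden θ (k+2) := by
  rw [qden_rec ha k]
  have h1 := qden_pos ha k
  have h2 : (qden θ (k+1))^2 ≤ (qden θ (k+1))^3 :=
    Nat.pow_le_pow_right (qden_pos ha (k+1)) (by omega)
  omega

lemma two_qden_le (k : ℕ) : 2 * qden θ k ≤ qden θ (k+2) := by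
  rw [qden_rec ha k]
  have h1 : qden θ k ≤ qden θ (k+1) := qden_mono ha (Nat.le_succ k)
  have h2 : qden θ (k+1) ≤ (qden θ (k+1))^3 := Nat.le_self_pow (by norm_num) _
  omega

lemma qden_geom (k : ℕ) : 2^(k+1) ≤ qden θ (k+2) := by
  induction k with
  | zero => norm_num [qden_two ha]
  | succ k ih =>
    have h2 := qden_ge2 ha k
    have : 2 * qden θ (k+2) ≤ qden θ (k+3) := by
      have hr : qden θ (k+3) = (qden θ (k+2))^3 + qden θ (k+1) := qden_rec ha (k+1)
      rw [hr]
      have hq := qden_pos ha (k+2)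
      have hmul : 2 * qden θ (k+2) ≤ qden θ (k+2) * qden θ (k+2) :=
        Nat.mul_le_mul_right _ h2
      have hcube : qden θ (k+2) * qden θ (k+2) ≤ (qden θ (k+2))^3 := by
        have he : (qden θ (k+2))^3 = qden θ (k+2) * qden θ (k+2) * qden θ (k+2) := by ring
        rw [he]
        exact Nat.le_mul_of_pos_right _ hq
      omega
    calc 2^(k+2) = 2 * 2^(k+1) := by ring
      _ ≤ 2 * qden θ (k+2) := by omega
      _ ≤ qden θ (k+3) := this

-- approximation bounds
lemma nint_ub (hθ : Irrational θ) (k : ℕ) :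
    nint ((qden θ k : ℝ) * θ) ≤ 1 / (qden θ (k+1) : ℝ) := by
  obtain ⟨m, hm⟩ := nums_int hθ ha k
  have hQpos : (0:ℝ) < (qden θ k : ℝ) := by exact_mod_cast qden_pos ha k
  have hQpos' : (0:ℝ) < (qden θ (k+1) : ℝ) := by exact_mod_cast qden_pos ha (k+1)
  have happ := abs_sub_convs_le (not_term hθ k) (v := θ)
  rw [conv_eq_num_div_den, hm, dens_eq ha k, dens_eq ha (k+1)] at happ
  calc nint ((qden θ k : ℝ) * θ) ≤ |(qden θ k : ℝ) * θ - m| := nint_le_abs_sub_int _ m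
    _ = (qden θ k : ℝ) * |θ - (m : ℝ) / (qden θ k : ℝ)| := by
        rw [← abs_of_pos hQpos, ← abs_mul]
        congr 1
        field_simp
        rw [abs_of_pos hQpos]; ring
    _ ≤ (qden θ k : ℝ) * (1 / ((qden θ k : ℝ) * (qden θ (k+1) : ℝ))) := by
        exact mul_le_mul_of_nonneg_left happ (le_of_lt hQpos)
    _ = 1 / (qden θ (k+1) : ℝ) := by field_simp

lemma nint_lb (hθ : Irrational θ) (k : ℕ) (hk : 2 ≤ k) :
    1 / (2 * (qden θ (k+1) : ℝ)) ≤ nint ((qden θ k : ℝ) * θ) := by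
  obtain ⟨m, hm⟩ := nums_int hθ ha k
  obtain ⟨m', hm'⟩ := nums_int hθ ha (k+1)
  have hQ0 : (0:ℝ) < (qden θ k : ℝ) := by exact_mod_cast qden_pos ha k
  have hQ1 : (0:ℝ) < (qden θ (k+1) : ℝ) := by exact_mod_cast qden_pos ha (k+1)
  have hQ2 : (0:ℝ) < (qden θ (k+2) : ℝ) := by exact_mod_cast qden_pos ha (k+2)
  -- determinant
  have hdet := SimpContFract.determinant (s := SimpContFract.of θ) (not_term hθ k)
  have hcoe : ((SimpContFract.of θ : SimpContFract ℝ) : GenContFract ℝ) = GenContFract.of θ := rfl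
  rw [hcoe, hm, hm', dens_eq ha k, dens_eq ha (k+1)] at hdet
  have hdet' : |(m:ℝ) * (qden θ (k+1) : ℝ) - (qden θ k : ℝ) * (m' : ℝ)| = 1 := by
    rw [hdet, abs_pow, abs_neg, abs_one, one_pow]
  -- convergent difference
  have hdiff : |(m' : ℝ)/(qden θ (k+1) : ℝ) - (m : ℝ)/(qden θ k : ℝ)|
      = 1 / ((qden θ k : ℝ) * (qden θ (k+1) : ℝ)) := by
    rw [div_sub_div _ _ (ne_of_gt hQ1) (ne_of_gt hQ0), abs_div,
      abs_of_pos (by positivity : (0:ℝ) < (qden θ (k+1) : ℝ) * (qden θ k : ℝ))]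
    rw [show (m':ℝ) * (qden θ k : ℝ) - (qden θ (k+1) : ℝ) * (m : ℝ)
      = -((m:ℝ) * (qden θ (k+1) : ℝ) - (qden θ k : ℝ) * (m' : ℝ)) by ring, abs_neg, hdet']
    rw [mul_comm]
  have happ1 := abs_sub_convs_le (not_term hθ (k+1)) (v := θ)
  rw [conv_eq_num_div_den, hm', dens_eq ha (k+1), dens_eq ha (k+2)] at happ1
  -- triangle inequality
  have htri : 1 / ((qden θ k : ℝ) * (qden θ (k+1) : ℝ)) - 1/((qden θ (k+1):ℝ) * (qden θ (k+2):ℝ))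
      ≤ |θ - (m : ℝ)/(qden θ k : ℝ)| := by
    have := abs_sub_abs_le_abs_sub ((m' : ℝ)/(qden θ (k+1) : ℝ) - (m : ℝ)/(qden θ k : ℝ))
      ((m' : ℝ)/(qden θ (k+1) : ℝ) - θ)
    rw [hdiff] at this
    have h2 : |(m' : ℝ)/(qden θ (k+1) : ℝ) - θ| ≤ 1/((qden θ (k+1):ℝ) * (qden θ (k+2):ℝ)) := by
      rw [abs_sub_comm]; exact happ1
    have h3 : ((m' : ℝ)/(qden θ (k+1) : ℝ) - (m : ℝ)/(qden θ k : ℝ))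
        - ((m' : ℝ)/(qden θ (k+1) : ℝ) - θ) = θ - (m : ℝ)/(qden θ k : ℝ) := by ring
    rw [h3] at this
    linarith [abs_nonneg (θ - (m : ℝ)/(qden θ k : ℝ))]
  -- multiply by q_k
  have hmul : (qden θ k : ℝ) * |θ - (m : ℝ)/(qden θ k : ℝ)| = |(qden θ k : ℝ) * θ - m| := by
    rw [← abs_of_pos hQ0, ← abs_mul]
    congr 1
    field_simp
    rw [abs_of_pos hQ0]
  have h2Q : 2 * (qden θ k : ℝ) ≤ (qden θ (k+2) : ℝ) := by exact_mod_cast two_qden_le ha k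
  have hlow : 1 / (2 * (qden θ (k+1) : ℝ)) ≤ |(qden θ k : ℝ) * θ - m| := by
    rw [← hmul]
    have step : (qden θ k : ℝ) * (1 / ((qden θ k : ℝ) * (qden θ (k+1) : ℝ))
        - 1/((qden θ (k+1):ℝ) * (qden θ (k+2):ℝ)))
        ≤ (qden θ k : ℝ) * |θ - (m : ℝ)/(qden θ k : ℝ)| :=
      mul_le_mul_of_nonneg_left htri (le_of_lt hQ0)
    refine le_trans ?_ step
    rw [mul_sub]
    have e1 : (qden θ k : ℝ) * (1 / ((qden θ k : ℝ) * (qden θ (k+1) : ℝ)))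
        = 1 / (qden θ (k+1) : ℝ) := by field_simp
    rw [e1]
    have e2 : (qden θ k : ℝ) * (1/((qden θ (k+1):ℝ) * (qden θ (k+2):ℝ)))
        ≤ 1 / (2 * (qden θ (k+1) : ℝ)) := by
      rw [mul_one_div, div_le_div_iff₀ (by positivity) (by positivity)]
      calc (qden θ k : ℝ) * (2 * (qden θ (k+1) : ℝ))
          = (2 * (qden θ k : ℝ)) * (qden θ (k+1) : ℝ) := by ring
        _ ≤ (qden θ (k+2) : ℝ) * (qden θ (k+1) : ℝ) :=
            mul_le_mul_of_nonneg_right h2Q (le_of_lt hQ1)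
        _ = 1 * ((qden θ (k+1):ℝ) * (qden θ (k+2):ℝ)) := by ring
    have e3 : 1 / (2 * (qden θ (k+1) : ℝ)) = 1/(qden θ (k+1):ℝ) - 1/(2 * (qden θ (k+1):ℝ)) := by
      field_simp; ring
    linarith
  -- |q_k θ - m| < 1/2 so nint equals it
  have hub : |(qden θ k : ℝ) * θ - m| ≤ 1 / (qden θ (k+1) : ℝ) := by
    rw [← hmul]
    calc (qden θ k : ℝ) * |θ - (m : ℝ)/(qden θ k : ℝ)|
        ≤ (qden θ k : ℝ) * (1 / ((qden θ k : ℝ) * (qden θ (k+1) : ℝ))) := by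
          have happ := abs_sub_convs_le (not_term hθ k) (v := θ)
          rw [conv_eq_num_div_den, hm, dens_eq ha k, dens_eq ha (k+1)] at happ
          exact mul_le_mul_of_nonneg_left happ (le_of_lt hQ0)
      _ = 1 / (qden θ (k+1) : ℝ) := by field_simp
  have h9 : (9:ℝ) ≤ (qden θ (k+1) : ℝ) := by
    have : 9 ≤ qden θ (k+1) := by
      obtain ⟨j, rfl⟩ : ∃ j, k = j + 2 := ⟨k - 2, by omega⟩
      exact qden_ge9 ha j
    exact_mod_cast this
  have hhalf : |(qden θ k : ℝ) * θ - m| < 1/2 := by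
    have : 1 / (qden θ (k+1) : ℝ) ≤ 1/9 := by
      rw [div_le_div_iff₀ (by linarith) (by norm_num)]; linarith
    linarith
  rw [nint_eq_of_abs_sub_lt_half hhalf]
  exact hlow

variable (hθ : Irrational θ) (φ : ℕ → ℝ) (hφpos : ∀ n, 0 < φ n)
  (hφdef : ∀ k n, (qden θ k) ^ 2 < n → n ≤ (qden θ (k + 1)) ^ 2 →
      φ n = 1 / (2 * (qden θ (k + 1) : ℝ) ^ 3))
include ha hθ hφpos hφdef

omit ha hθ hφdef in
lemma minSum_nonneg (s : ℝ) (k : ℕ) : 0 ≤ minSum θ φ s k := by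
  apply Finset.sum_nonneg
  intro n _
  exact le_min (Real.rpow_nonneg (hφpos n).le s) (nint_nonneg _)

lemma block_bound (s : ℝ) (hs1 : 1/3 < s) (k : ℕ) :
    minSum θ φ s (k+1) ≤ 1/(qden θ (k+1) : ℝ) + (1/(qden θ (k+1) : ℝ)) ^ (3*s-1) := by
  have hφn' : ∀ n, (qden θ (k+1))^2 < n → n ≤ (qden θ (k+2))^2 →
      φ n = 1 / (2 * (qden θ (k+2) : ℝ) ^ 3) := hφdef (k+1)
  have hub : nint ((qden θ (k+1) : ℝ) * θ) ≤ 1 / (qden θ (k+2) : ℝ) := nint_ub ha hθ (k+1)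
  have hself : qden θ (k+2) ≤ (qden θ (k+2))^2 := Nat.le_self_pow (by norm_num) _
  have hmono2 : qden θ (k+1) ≤ qden θ (k+2) := qden_mono ha (Nat.le_succ (k+1))
  set Q := qden θ (k+1) with hQdef
  set Q' := qden θ (k+2) with hQ'def
  have hQ1 : 1 ≤ Q := qden_pos ha (k+1)
  have hQ'1 : 1 ≤ Q' := qden_pos ha (k+2)
  have hQr : (0:ℝ) < (Q:ℝ) := by exact_mod_cast hQ1
  have hQ'r : (0:ℝ) < (Q':ℝ) := by exact_mod_cast hQ'1
  have hsplit1 : Q ≤ Q^2 + 1 := by nlinarith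
  have hsplit2 : Q^2 + 1 ≤ Q' := sq_succ ha k
  have hcube : (Q:ℝ)^3 ≤ (Q':ℝ) := by exact_mod_cast cube_le' ha (k+1)
  have hs0 : (0:ℝ) ≤ s := by linarith
  rw [minSum, ← Finset.sum_Ico_consecutive _ hsplit1 hsplit2]
  have hA : ∑ n ∈ Finset.Ico Q (Q^2+1), min (φ n ^ s) (nint ((Q : ℝ) * θ))
      ≤ 1/(Q:ℝ) := by
    have h1 : ∑ n ∈ Finset.Ico Q (Q^2+1), min (φ n ^ s) (nint ((Q : ℝ) * θ))
        ≤ ∑ n ∈ Finset.Ico Q (Q^2+1), (1/(Q':ℝ)) := by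
      apply Finset.sum_le_sum
      intro n _
      exact le_trans (min_le_right _ _) hub
    rw [Finset.sum_const, Nat.card_Ico, nsmul_eq_mul] at h1
    refine le_trans h1 ?_
    have hcard : ((Q^2 + 1 - Q : ℕ) : ℝ) ≤ (Q:ℝ)^2 := by
      have : Q^2 + 1 - Q ≤ Q^2 := by omega
      exact_mod_cast this
    calc ((Q^2 + 1 - Q : ℕ) : ℝ) * (1/(Q':ℝ)) ≤ (Q:ℝ)^2 * (1/(Q':ℝ)) := by
          apply mul_le_mul_of_nonneg_right hcard (by positivity)
      _ ≤ (Q:ℝ)^2 * (1/(Q:ℝ)^3) := by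
          apply mul_le_mul_of_nonneg_left _ (by positivity)
          apply one_div_le_one_div_of_le (by positivity) hcube
      _ = 1/(Q:ℝ) := by field_simp
  have hterm : ∀ n ∈ Finset.Ico (Q^2+1) Q', min (φ n ^ s) (nint ((Q : ℝ) * θ))
        ≤ ((Q':ℝ)) ^ (-(3*s) : ℝ) := by
      intro n hn
      rw [Finset.mem_Ico] at hn
      have hφn : φ n = 1 / (2 * (Q' : ℝ) ^ 3) := by
        apply hφn' n (by omega) (by omega)
      refine le_trans (min_le_left _ _) ?_
      rw [hφn]
      have h1 : (1 / (2 * (Q':ℝ)^3)) ≤ 1/(Q':ℝ)^3 := by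
        apply one_div_le_one_div_of_le (by positivity)
        nlinarith [pow_pos hQ'r 3]
      have h2 : (1 / (2 * (Q':ℝ)^3) : ℝ) ^ s ≤ (1/(Q':ℝ)^3) ^ s :=
        Real.rpow_le_rpow (by positivity) h1 hs0
      refine le_trans h2 ?_
      rw [show (1/(Q':ℝ)^3 : ℝ) = (Q':ℝ) ^ (-(3:ℝ)) by
        rw [Real.rpow_neg hQ'r.le, ← Real.rpow_natCast (Q':ℝ) 3]
        norm_num]
      rw [← Real.rpow_mul hQ'r.le]
      apply le_of_eq
      congr 1
      ring
  have hBsum : ∑ n ∈ Finset.Ico (Q^2+1) Q', min (φ n ^ s) (nint ((Q : ℝ) * θ))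
      ≤ (1/(Q:ℝ)) ^ (3*s-1) := by
    calc ∑ n ∈ Finset.Ico (Q^2+1) Q', min (φ n ^ s) (nint ((Q : ℝ) * θ))
        ≤ ∑ _n ∈ Finset.Ico (Q^2+1) Q', ((Q':ℝ)) ^ (-(3*s) : ℝ) :=
          Finset.sum_le_sum hterm
      _ = ((Q' - (Q^2+1) : ℕ) : ℝ) * ((Q':ℝ)) ^ (-(3*s) : ℝ) := by
          rw [Finset.sum_const, Nat.card_Ico, nsmul_eq_mul]
      _ ≤ (Q':ℝ) * ((Q':ℝ)) ^ (-(3*s) : ℝ) := by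
          apply mul_le_mul_of_nonneg_right _ (by positivity)
          have : (Q' - (Q^2+1) : ℕ) ≤ Q' := by omega
          exact_mod_cast this
      _ = (Q':ℝ) ^ (1 + (-(3*s)) : ℝ) := by
          rw [Real.rpow_add hQ'r, Real.rpow_one]
      _ = (1/(Q':ℝ)) ^ (3*s-1) := by
          rw [one_div, ← Real.rpow_neg_one (Q':ℝ), ← Real.rpow_mul hQ'r.le]
          congr 1
          ring
      _ ≤ (1/(Q:ℝ)) ^ (3*s-1) := by
          apply Real.rpow_le_rpow (by positivity) _ (by linarith)
          apply one_div_le_one_div_of_le hQr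
          exact_mod_cast hmono2
  exact add_le_add hA hBsum

lemma conv_summable (s : ℝ) (hs1 : 1/3 < s) :
    Summable (fun k => minSum θ φ s k) := by
  rw [← summable_nat_add_iff 2]
  set ε := 3*s - 1 with hε
  have hε0 : 0 < ε := by rw [hε]; linarith
  have hr0 : (0:ℝ) ≤ (2:ℝ) ^ (-ε) := Real.rpow_nonneg (by norm_num) _
  have hr1 : (2:ℝ) ^ (-ε) < 1 :=
    Real.rpow_lt_one_of_one_lt_of_neg (by norm_num) (by linarith)
  apply Summable.of_nonneg_of_le (fun j => minSum_nonneg φ hφpos s (j+2))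
    (f := fun j => ((1:ℝ)/2)^j + ((2:ℝ) ^ (-ε))^j)
  · intro j
    have hgeo : 2^(j+1) ≤ qden θ (j+2) := qden_geom ha j
    have hgeor : (2:ℝ)^(j+1) ≤ (qden θ (j+2) : ℝ) := by exact_mod_cast hgeo
    have h2j : (0:ℝ) < 2^(j+1) := by positivity
    have hb := block_bound ha hθ φ hφpos hφdef s hs1 (j+1)
    have hmain : minSum θ φ s (j+2)
        ≤ 1/(qden θ (j+2) : ℝ) + (1/(qden θ (j+2) : ℝ)) ^ ε := hb
    refine le_trans hmain (add_le_add ?_ ?_)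
    · calc 1/(qden θ (j+2) : ℝ) ≤ 1/(2:ℝ)^(j+1) :=
            one_div_le_one_div_of_le h2j hgeor
        _ ≤ ((1:ℝ)/2)^j := by
            rw [one_div_pow (2:ℝ)]
            apply one_div_le_one_div_of_le (by positivity)
            calc (2:ℝ)^j ≤ 2^(j+1) := by
                  apply pow_le_pow_right₀ (by norm_num) (by omega)
              _ = 2^(j+1) := rfl
    · have h1 : 1/(qden θ (j+2) : ℝ) ≤ 1/(2:ℝ)^j := by
        apply one_div_le_one_div_of_le (by positivity)
        calc (2:ℝ)^j ≤ 2^(j+1) := by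
              apply pow_le_pow_right₀ (by norm_num) (by omega)
          _ ≤ (qden θ (j+2) : ℝ) := hgeor
      calc (1/(qden θ (j+2) : ℝ)) ^ ε ≤ (1/(2:ℝ)^j) ^ ε := by
            apply Real.rpow_le_rpow (by positivity) h1 hε0.le
        _ = ((2:ℝ) ^ (-ε))^j := by
            rw [one_div, ← Real.rpow_natCast (2:ℝ) j, ← Real.rpow_neg (by norm_num),
              ← Real.rpow_mul (by norm_num), ← Real.rpow_natCast ((2:ℝ) ^ (-ε)) j,
              ← Real.rpow_mul (by norm_num)]
            congr 1
            ring
  · exact (summable_geometric_of_lt_one (by norm_num) (by norm_num)).add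
      (summable_geometric_of_lt_one hr0 hr1)

lemma div_bound (s : ℝ) (hs0 : 0 ≤ s) (hs3 : s ≤ 1/3) (j : ℕ) :
    1/4 ≤ minSum θ φ s (j+3) := by
  have hφn' : ∀ n, (qden θ (j+3))^2 < n → n ≤ (qden θ (j+4))^2 →
      φ n = 1 / (2 * (qden θ (j+4) : ℝ) ^ 3) := hφdef (j+3)
  have hlb : 1 / (2 * (qden θ (j+4) : ℝ)) ≤ nint ((qden θ (j+3) : ℝ) * θ) :=
    nint_lb ha hθ (j+3) (by omega)
  have hrec : qden θ (j+4) = (qden θ (j+3))^3 + qden θ (j+2) := qden_rec ha (j+2)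
  have h9 : 9 ≤ qden θ (j+3) := qden_ge9 ha j
  have hsq : (qden θ (j+3))^2 + 1 ≤ qden θ (j+4) := sq_succ ha (j+2)
  have hself : qden θ (j+4) ≤ (qden θ (j+4))^2 := Nat.le_self_pow (by norm_num) _
  have hQ'1 : 1 ≤ qden θ (j+4) := qden_pos ha (j+4)
  set Q := qden θ (j+3) with hQdef
  set Q' := qden θ (j+4) with hQ'def
  have hQ'r : (0:ℝ) < (Q':ℝ) := by exact_mod_cast hQ'1
  -- 2*(Q^2+1) ≤ Q'
  have hhalf : 2*(Q^2+1) ≤ Q' := by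
    have hc : Q^3 = Q * Q^2 := by ring
    have h3 : 3 * Q^2 ≤ Q * Q^2 := Nat.mul_le_mul_right _ (by omega)
    have h92 : 81 ≤ Q^2 := by
      calc 81 = 9^2 := by norm_num
        _ ≤ Q^2 := Nat.pow_le_pow_left h9 2
    omega
  -- lower bound each term by 1/(2Q')
  have hterm : ∀ n ∈ Finset.Ico (Q^2+1) Q',
      1/(2*(Q':ℝ)) ≤ min (φ n ^ s) (nint ((Q : ℝ) * θ)) := by
    intro n hn
    rw [Finset.mem_Ico] at hn
    have hφn : φ n = 1 / (2 * (Q' : ℝ) ^ 3) := hφn' n (by omega) (by omega)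
    refine le_min ?_ hlb
    rw [hφn]
    have hbase0 : (0:ℝ) < 1 / (2 * (Q':ℝ)^3) := by positivity
    have hbase1 : 1 / (2 * (Q':ℝ)^3) ≤ 1 := by
      rw [div_le_one (by positivity)]
      nlinarith [pow_pos hQ'r 3, one_le_pow₀ (by exact_mod_cast hQ'1 : (1:ℝ) ≤ (Q':ℝ)) (n := 3)]
    have hmono : (1 / (2 * (Q':ℝ)^3)) ^ ((1:ℝ)/3) ≤ (1 / (2 * (Q':ℝ)^3)) ^ s :=
      Real.rpow_le_rpow_of_exponent_ge hbase0 hbase1 hs3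
    refine le_trans ?_ hmono
    -- (1/(2Q'))^3 ≤ 1/(2Q'^3), take cube roots
    have hc3 : ((1/(2*(Q':ℝ))) ^ (3:ℕ) : ℝ) ≤ 1 / (2 * (Q':ℝ)^3) := by
      rw [div_pow, one_pow]
      apply one_div_le_one_div_of_le (by positivity)
      rw [mul_pow]
      nlinarith [pow_pos hQ'r 3]
    have key : ((1/(2*(Q':ℝ))) ^ (3:ℕ) : ℝ) ^ ((1:ℝ)/3) ≤ (1 / (2 * (Q':ℝ)^3)) ^ ((1:ℝ)/3) :=
      Real.rpow_le_rpow (by positivity) hc3 (by norm_num)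
    refine le_trans (le_of_eq ?_) key
    rw [← Real.rpow_natCast (1/(2*(Q':ℝ))) 3, ← Real.rpow_mul (by positivity)]
    norm_num
  -- sum lower bound
  have hsub : Finset.Ico (Q^2+1) Q' ⊆ Finset.Ico Q Q' := by
    apply Finset.Ico_subset_Ico _ (le_refl _)
    nlinarith [qden_pos ha (j+3)]
  have hmin : minSum θ φ s (j+3) ≥ ∑ n ∈ Finset.Ico (Q^2+1) Q',
      min (φ n ^ s) (nint ((Q : ℝ) * θ)) := by
    apply Finset.sum_le_sum_of_subset_of_nonneg hsub
    intro n _ _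
    exact le_min (Real.rpow_nonneg (hφpos n).le s) (nint_nonneg _)
  have hcard : ∑ n ∈ Finset.Ico (Q^2+1) Q', min (φ n ^ s) (nint ((Q : ℝ) * θ))
      ≥ ((Q' - (Q^2+1) : ℕ) : ℝ) * (1/(2*(Q':ℝ))) := by
    have := Finset.card_nsmul_le_sum (Finset.Ico (Q^2+1) Q') _ _ hterm
    rwa [Nat.card_Ico, nsmul_eq_mul] at this
  have hcount : ((Q' - (Q^2+1) : ℕ) : ℝ) ≥ (Q':ℝ)/2 := by
    have h1 : (Q' - (Q^2+1) : ℕ) = Q' - (Q^2+1) := rfl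
    have h2 : Q^2 + 1 ≤ Q' := hsq
    have h3 : ((Q' - (Q^2+1) : ℕ) : ℝ) = (Q':ℝ) - ((Q^2+1 : ℕ):ℝ) := by
      rw [Nat.cast_sub h2]
    rw [h3]
    have h4 : ((Q^2+1 : ℕ):ℝ) ≤ (Q':ℝ)/2 := by
      have : (2*(Q^2+1) : ℕ) ≤ (Q' : ℕ) := hhalf
      have h5 : ((2*(Q^2+1) : ℕ) : ℝ) ≤ (Q':ℝ) := by exact_mod_cast this
      push_cast at h5 ⊢
      linarith
    linarith
  calc (1:ℝ)/4 = ((Q':ℝ)/2) * (1/(2*(Q':ℝ))) := by field_simp; ring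
    _ ≤ ((Q' - (Q^2+1) : ℕ) : ℝ) * (1/(2*(Q':ℝ))) := by
        apply mul_le_mul_of_nonneg_right hcount (by positivity)
    _ ≤ ∑ n ∈ Finset.Ico (Q^2+1) Q', min (φ n ^ s) (nint ((Q : ℝ) * θ)) := hcard
    _ ≤ minSum θ φ s (j+3) := hmin

lemma not_summable_low (s : ℝ) (hs0 : 0 ≤ s) (hs3 : s ≤ 1/3) :
    ¬ Summable (fun k => minSum θ φ s k) := by
  intro hsum
  have ht := hsum.tendsto_atTop_zero
  have h4 : ∀ᶠ k in atTop, minSum θ φ s k < 1/4 :=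
    ht.eventually_lt_const (by norm_num)
  obtain ⟨k, hk1, hk2⟩ := (h4.and (eventually_ge_atTop 3)).exists
  obtain ⟨j, rfl⟩ : ∃ j, k = j + 3 := ⟨k - 3, by omega⟩
  exact absurd (div_bound ha hθ φ hφpos hφdef s hs0 hs3 j) (by linarith)

end


/-- The series computation in the example of Section 2: the mass transference series
converges for `1/3 < s < 1`, diverges for `0 < s < 1/3`, and the corresponding
infimum equals `1/3`. -/
theorem minSum_series_example (θ : ℝ) (hθ : Irrational θ) (φ : ℕ → ℝ)
    (hφpos : ∀ n, 0 < φ n) (hφanti : Antitone φ)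
    (hφ0 : Tendsto φ atTop (nhds 0))
    (ha : ∀ k, (GenContFract.of θ).partDens.get? k = some ((qden θ k : ℝ) ^ 2))
    (hφdef : ∀ k n, (qden θ k) ^ 2 < n → n ≤ (qden θ (k + 1)) ^ 2 →
      φ n = 1 / (2 * (qden θ (k + 1) : ℝ) ^ 3)) :
    (∀ s : ℝ, 1 / 3 < s → s < 1 → Summable fun k => minSum θ φ s k) ∧
    (∀ s : ℝ, 0 < s → s < 1 / 3 → ¬ Summable fun k => minSum θ φ s k) ∧
    sInf {s : ℝ | 0 ≤ s ∧ Summable fun k => minSum θ φ s k} = 1 / 3 := by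
  have hconv : ∀ s : ℝ, 1/3 < s → Summable fun k => minSum θ φ s k :=
    fun s hs1 => conv_summable ha hθ φ hφpos hφdef s hs1
  have hdiv : ∀ s : ℝ, 0 ≤ s → s ≤ 1/3 → ¬ Summable fun k => minSum θ φ s k :=
    fun s hs0 hs3 => not_summable_low ha hθ φ hφpos hφdef s hs0 hs3
  refine ⟨fun s hs1 _ => hconv s hs1, fun s hs0 hs3 => hdiv s hs0.le hs3.le, ?_⟩
  have hmem : (1/2 : ℝ) ∈ {s : ℝ | 0 ≤ s ∧ Summable fun k => minSum θ φ s k} :=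
    ⟨by norm_num, hconv (1/2) (by norm_num)⟩
  have hbdd : BddBelow {s : ℝ | 0 ≤ s ∧ Summable fun k => minSum θ φ s k} :=
    ⟨0, fun x hx => hx.1⟩
  have hlow : ∀ s ∈ {s : ℝ | 0 ≤ s ∧ Summable fun k => minSum θ φ s k}, 1/3 ≤ s := by
    intro s hs
    by_contra h
    push_neg at h
    exact hdiv s hs.1 h.le hs.2
  apply le_antisymm
  · by_contra hgt
    push_neg at hgt
    set I := sInf {s : ℝ | 0 ≤ s ∧ Summable fun k => minSum θ φ s k} with hI
    set t := min (1/2 : ℝ) ((1/3 + I)/2) with htdef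
    have ht3 : 1/3 < t := lt_min (by norm_num) (by rw [hI] at hgt ⊢; linarith)
    have htS : t ∈ {s : ℝ | 0 ≤ s ∧ Summable fun k => minSum θ φ s k} :=
      ⟨by linarith, hconv t ht3⟩
    have h1 : I ≤ t := csInf_le hbdd htS
    have h2 : t < I := lt_of_le_of_lt (min_le_right _ _) (by linarith)
    linarith
  · exact le_csInf ⟨1/2, hmem⟩ hlow
end

section
/- Let θ be an irrational number and φ : ℕ → ℝ⁺ a monotone decreasing function tending to zero. Then the Hausdorff dimension of E_φ(θ) is at most u_φ := limsup_{n→∞} (log n)/(−log φ(n)). -/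
open Filter

open MeasureTheory EMetric Set in
/-- If `∑ φ(n)^s < ∞` then `dimH E_φ(θ) ≤ s`. -/
lemma aux_dimH_Eset_le (θ : ℝ) (φ : ℕ → ℝ) (hφpos : ∀ n, 0 < φ n) (hφanti : Antitone φ)
    (hφ0 : Tendsto φ atTop (nhds 0)) (s : NNReal) (hs : 0 < (s : ℝ))
    (hsum : Summable fun n => φ n ^ (s : ℝ)) : dimH (Eset θ φ) ≤ s := by
  -- reduce to bounded pieces
  have hcover : Eset θ φ ⊆ ⋃ j : ℕ, Eset θ φ ∩ Metric.closedBall 0 j := by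
    intro y hy
    obtain ⟨j, hj⟩ := exists_nat_ge |y|
    exact Set.mem_iUnion.2 ⟨j, hy, by simpa [Metric.mem_closedBall, Real.dist_eq] using hj⟩
  refine le_trans (dimH_mono hcover) ?_
  rw [dimH_iUnion]
  refine iSup_le fun j => ?_
  -- bounded piece
  set B := Eset θ φ ∩ Metric.closedBall (0 : ℝ) j with hB
  apply dimH_le_of_hausdorffMeasure_ne_top (d := s)
  -- the covering sets
  set T : ℕ → ℕ × ℤ → Set ℝ := fun N p =>
    if N ≤ p.1 ∧ |(p.2 : ℝ) - (p.1 : ℝ) * θ| ≤ (j : ℝ) + 1 then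
      Metric.ball ((p.1 : ℝ) * θ - (p.2 : ℝ)) (φ p.1) else ∅ with hT
  have hdiam1 : ∀ N p, diam (T N p) ≤ ENNReal.ofReal (2 * φ p.1) := by
    intro N p
    simp only [hT]
    split_ifs with h
    · calc diam (Metric.ball ((p.1 : ℝ) * θ - (p.2 : ℝ)) (φ p.1))
          ≤ 2 * ENNReal.ofReal (φ p.1) := by
            rw [← Metric.emetric_ball]; exact EMetric.diam_ball
        _ = ENNReal.ofReal (2 * φ p.1) := by
            rw [ENNReal.ofReal_mul (by norm_num : (0:ℝ) ≤ 2)]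
            norm_num
    · simp [EMetric.diam]
  have hdiam : ∀ N p, diam (T N p) ≤ ENNReal.ofReal (2 * φ N) := by
    intro N p
    by_cases h : N ≤ p.1 ∧ |(p.2 : ℝ) - (p.1 : ℝ) * θ| ≤ (j : ℝ) + 1
    · refine (hdiam1 N p).trans (ENNReal.ofReal_le_ofReal ?_)
      nlinarith [hφanti h.1, hφpos p.1]
    · have : T N p = ∅ := by simp only [hT]; rw [if_neg h]
      simp [this, EMetric.diam]
  have hst : ∀ N : ℕ, B ⊆ ⋃ p : ℕ × ℤ, T N p := by
    intro N y hy
    obtain ⟨hyE, hyB⟩ := hy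
    obtain ⟨n, hn, hNn⟩ := hyE.exists_gt N
    have hn' : |(n : ℝ) * θ - y - (round ((n : ℝ) * θ - y) : ℝ)| < φ n := hn
    set m : ℤ := round ((n : ℝ) * θ - y) with hm
    have hyj : |y| ≤ (j : ℝ) := by simpa [Real.dist_eq] using hyB
    refine Set.mem_iUnion.2 ⟨(n, m), ?_⟩
    simp only [hT]
    have hcond : N ≤ (n, m).1 ∧ |((n, m).2 : ℝ) - ((n, m).1 : ℝ) * θ| ≤ (j : ℝ) + 1 := by
      constructor
      · exact hNn.le
      · have h12 : |(n : ℝ) * θ - y - (m : ℝ)| ≤ 1 / 2 := abs_sub_round _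
        have : |(m : ℝ) - (n : ℝ) * θ| ≤ |(n : ℝ) * θ - y - (m : ℝ)| + |y| := by
          have : (m : ℝ) - (n : ℝ) * θ = -(((n : ℝ) * θ - y - m)) - y := by ring
          rw [this]
          exact (abs_sub _ _).trans (by rw [abs_neg])
        calc |((n, m).2 : ℝ) - ((n, m).1 : ℝ) * θ| ≤ 1 / 2 + (j : ℝ) := by
              simpa using this.trans (add_le_add h12 hyj)
          _ ≤ (j : ℝ) + 1 := by linarith
    rw [if_pos hcond]
    rw [Metric.mem_ball, Real.dist_eq]
    calc |y - ((n : ℝ) * θ - (m : ℝ))| = |(n : ℝ) * θ - y - (m : ℝ)| := by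
          rw [abs_sub_comm]; ring_nf
      _ < φ n := hn'
  -- the majorant series
  set g : ℕ → ENNReal := fun n =>
    ((2 * j + 4 : ℕ) : ENNReal) * ENNReal.ofReal ((2 * φ n) ^ (s : ℝ)) with hg
  have hgsum : ∑' n, g n ≠ ⊤ := by
    rw [hg, ENNReal.tsum_mul_left]
    have hsum2 : Summable fun n => (2 * φ n) ^ (s : ℝ) := by
      have : ∀ n, (2 * φ n) ^ (s : ℝ) = 2 ^ (s : ℝ) * φ n ^ (s : ℝ) := fun n =>
        Real.mul_rpow (by norm_num) (hφpos n).le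
      simpa [this] using hsum.mul_left ((2 : ℝ) ^ (s : ℝ))
    rw [← ENNReal.ofReal_tsum_of_nonneg (fun n => Real.rpow_nonneg (by nlinarith [hφpos n]) _)
      hsum2]
    exact ENNReal.mul_ne_top (ENNReal.natCast_ne_top _) ENNReal.ofReal_ne_top
  -- bound the cover sums
  have hFle : ∀ N : ℕ, (∑' p : ℕ × ℤ, diam (T N p) ^ (s : ℝ)) ≤ ∑' k, g (k + N) := by
    intro N
    have hprod : (∑' p : ℕ × ℤ, diam (T N p) ^ (s : ℝ))
        = ∑' (n : ℕ) (m : ℤ), diam (T N (n, m)) ^ (s : ℝ) :=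
      ENNReal.tsum_prod (f := fun n m => diam (T N (n, m)) ^ (s : ℝ))
    set fN : ℕ → ENNReal := fun n => ∑' m : ℤ, diam (T N (n, m)) ^ (s : ℝ) with hfN
    have hzero : ∀ n < N, fN n = 0 := by
      intro n hn
      rw [hfN]
      have : ∀ m : ℤ, diam (T N (n, m)) ^ (s : ℝ) = 0 := by
        intro m
        simp only [hT]
        rw [if_neg (by simp [Nat.not_le.2 hn])]
        simp [EMetric.diam, ENNReal.zero_rpow_of_pos hs]
      simp [this]
    have hle : ∀ n, fN n ≤ g n := by
      intro n
      by_cases hNn : N ≤ n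
      · set S : Finset ℤ := Finset.Icc ⌈(n : ℝ) * θ - ((j : ℝ) + 1)⌉ ⌊(n : ℝ) * θ + ((j : ℝ) + 1)⌋
          with hS
        have hvanish : ∀ m ∉ S, diam (T N (n, m)) ^ (s : ℝ) = 0 := by
          intro m hm
          simp only [hT]
          rw [if_neg, EMetric.diam, diam_empty, ENNReal.zero_rpow_of_pos hs]
          rintro ⟨-, habs⟩
          refine hm ?_
          rw [hS, Finset.mem_Icc]
          rw [abs_le] at habs
          constructor
          · rw [Int.ceil_le]; linarith [habs.1]
          · rw [Int.le_floor]; linarith [habs.2]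
        have hterm : ∀ m ∈ S, diam (T N (n, m)) ^ (s : ℝ)
            ≤ ENNReal.ofReal ((2 * φ n) ^ (s : ℝ)) := by
          intro m _
          rw [← ENNReal.ofReal_rpow_of_pos (by nlinarith [hφpos n])]
          exact ENNReal.rpow_le_rpow (hdiam1 N (n, m)) hs.le
        have hcard : S.card ≤ 2 * j + 4 := by
          rw [hS, Int.card_Icc]
          have hf := Int.floor_le ((n : ℝ) * θ + ((j : ℝ) + 1))
          have hc := Int.le_ceil ((n : ℝ) * θ - ((j : ℝ) + 1))
          have h1 : ((⌊(n : ℝ) * θ + ((j : ℝ) + 1)⌋ + 1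
              - ⌈(n : ℝ) * θ - ((j : ℝ) + 1)⌉ : ℤ) : ℝ) ≤ ((2 * j + 4 : ℕ) : ℝ) := by
            push_cast
            linarith
          have h2 : (⌊(n : ℝ) * θ + ((j : ℝ) + 1)⌋ + 1
              - ⌈(n : ℝ) * θ - ((j : ℝ) + 1)⌉ : ℤ) ≤ ((2 * j + 4 : ℕ) : ℤ) := by
            exact_mod_cast h1
          exact Int.toNat_le.2 h2
        calc fN n = ∑ m ∈ S, diam (T N (n, m)) ^ (s : ℝ) := tsum_eq_sum hvanish
          _ ≤ S.card • ENNReal.ofReal ((2 * φ n) ^ (s : ℝ)) :=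
              Finset.sum_le_card_nsmul S _ _ hterm
          _ = (S.card : ENNReal) * ENNReal.ofReal ((2 * φ n) ^ (s : ℝ)) := nsmul_eq_mul _ _
          _ ≤ g n := by
              rw [hg]
              exact mul_le_mul_left (by exact_mod_cast Nat.cast_le.2 hcard) _
      · rw [hzero n (Nat.not_le.1 hNn)]; exact zero_le
    rw [hprod]
    have hshift : (∑' n, fN n) = ∑' k, fN (k + N) := by
      refine (Function.Injective.tsum_eq (add_left_injective N) ?_).symm
      intro n hn
      rcases Nat.lt_or_ge n N with h | h
      · exact absurd (hzero n h) hn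
      · exact ⟨n - N, Nat.sub_add_cancel h⟩
    rw [show (∑' (n : ℕ) (m : ℤ), diam (T N (n, m)) ^ (s : ℝ)) = ∑' n, fN n from rfl, hshift]
    exact ENNReal.tsum_le_tsum fun k => hle (k + N)
  -- conclude
  have hμ : μH[(s : ℝ)] B = 0 := by
    have hr : Tendsto (fun N : ℕ => ENNReal.ofReal (2 * φ N)) atTop (nhds 0) := by
      have := ENNReal.tendsto_ofReal (a := 0) (by simpa using hφ0.const_mul (2 : ℝ) :
        Tendsto (fun n : ℕ => 2 * φ n) atTop (nhds 0))
      simpa using this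
    have h1 : μH[(s : ℝ)] B ≤ liminf (fun N => ∑' p : ℕ × ℤ, diam (T N p) ^ (s : ℝ)) atTop :=
      Measure.hausdorffMeasure_le_liminf_tsum (s : ℝ) B (fun N => ENNReal.ofReal (2 * φ N)) hr T
        (Eventually.of_forall fun N => hdiam N) (Eventually.of_forall hst)
    have h2 : liminf (fun N => ∑' p : ℕ × ℤ, diam (T N p) ^ (s : ℝ)) atTop
        ≤ liminf (fun N => ∑' k, g (k + N)) atTop :=
      liminf_le_liminf (Eventually.of_forall hFle)
    have h3 : liminf (fun N : ℕ => ∑' k, g (k + N)) atTop = 0 :=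
      (ENNReal.tendsto_sum_nat_add g hgsum).liminf_eq
    exact le_antisymm (by rw [← h3]; exact h1.trans h2) zero_le
  rw [hμ]
  exact ENNReal.zero_ne_top

/-- Corollary 4.1, upper bound (Schmeling–Troubetzkoy, Bugeaud):
`dimH E_φ(θ) ≤ u_φ = limsup (log n)/(-log φ(n))`. -/
theorem dimH_Eset_le_limsup (θ : ℝ) (hθ : Irrational θ) (φ : ℕ → ℝ)
    (hφpos : ∀ n, 0 < φ n) (hφanti : Antitone φ)
    (hφ0 : Tendsto φ atTop (nhds 0)) :
    dimH (Eset θ φ) ≤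
      limsup (fun n : ℕ => ENNReal.ofReal (Real.log n / (-Real.log (φ n)))) atTop := by
  set u := limsup (fun n : ℕ => ENNReal.ofReal (Real.log n / (-Real.log (φ n)))) atTop with hu
  by_contra hcon
  push_neg at hcon
  obtain ⟨s, hus, hsd⟩ := ENNReal.lt_iff_exists_nnreal_btwn.1 hcon
  obtain ⟨t, hut, hts⟩ := ENNReal.lt_iff_exists_nnreal_btwn.1 hus
  have ht0 : (0 : ℝ) < t := by
    have h := (zero_le : 0 ≤ u).trans_lt hut
    exact_mod_cast h
  have hts' : (t : ℝ) < s := by exact_mod_cast hts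
  have hs0 : (0 : ℝ) < s := ht0.trans hts'
  -- eventually φ n ^ s ≤ n ^ (-(1/t) * s)
  have hev : ∀ᶠ n : ℕ in atTop, φ n ^ (s : ℝ) ≤ (n : ℝ) ^ (-(1 / (t : ℝ)) * (s : ℝ)) := by
    have hev1 : ∀ᶠ n : ℕ in atTop,
        ENNReal.ofReal (Real.log n / (-Real.log (φ n))) < (t : ENNReal) :=
      eventually_lt_of_limsup_lt hut
    have hev2 : ∀ᶠ n : ℕ in atTop, φ n < 1 := hφ0.eventually_lt_const one_pos
    have hev3 : ∀ᶠ n : ℕ in atTop, 1 ≤ n := eventually_ge_atTop 1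
    filter_upwards [hev1, hev2, hev3] with n hlt hφ1 hn1
    have hn1' : (1 : ℝ) ≤ (n : ℝ) := by exact_mod_cast hn1
    have hL : 0 < -Real.log (φ n) := by
      have := Real.log_neg (hφpos n) hφ1
      linarith
    have hlogn : 0 ≤ Real.log n := Real.log_nonneg hn1'
    have hratio : Real.log n / (-Real.log (φ n)) < (t : ℝ) := by
      rw [← ENNReal.ofReal_coe_nnreal] at hlt
      exact (ENNReal.ofReal_lt_ofReal_iff ht0).1 hlt
    have hlog : Real.log n < (t : ℝ) * (-Real.log (φ n)) := by
      rw [div_lt_iff₀ hL] at hratio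
      linarith
    have hφlt : φ n < (n : ℝ) ^ (-(1 / (t : ℝ))) := by
      rw [Real.rpow_def_of_pos (by linarith : (0:ℝ) < (n : ℝ))]
      calc φ n = Real.exp (Real.log (φ n)) := (Real.exp_log (hφpos n)).symm
        _ < Real.exp (Real.log n * (-(1 / (t : ℝ)))) := by
            apply Real.exp_lt_exp.2
            rw [show Real.log n * -(1 / (t : ℝ)) = -Real.log n / (t : ℝ) by ring,
              lt_div_iff₀ ht0]
            nlinarith
    calc φ n ^ (s : ℝ) ≤ ((n : ℝ) ^ (-(1 / (t : ℝ)))) ^ (s : ℝ) :=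
          Real.rpow_le_rpow (hφpos n).le hφlt.le hs0.le
      _ = (n : ℝ) ^ (-(1 / (t : ℝ)) * (s : ℝ)) := by
          rw [← Real.rpow_mul (by linarith : (0:ℝ) ≤ (n : ℝ))]
  have hsum : Summable fun n => φ n ^ (s : ℝ) := by
    obtain ⟨N0, hN0⟩ := eventually_atTop.1 hev
    rw [← summable_nat_add_iff N0]
    have hbase : Summable fun n : ℕ => (n : ℝ) ^ (-(1 / (t : ℝ)) * (s : ℝ)) := by
      apply Real.summable_nat_rpow.2
      have h1 : 1 < (s : ℝ) / (t : ℝ) := (one_lt_div ht0).2 hts'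
      have : -(1 / (t : ℝ)) * (s : ℝ) = -((s : ℝ) / (t : ℝ)) := by ring
      rw [this]
      linarith
    refine Summable.of_nonneg_of_le (fun k => Real.rpow_nonneg (hφpos _).le _)
      (fun k => hN0 (k + N0) (Nat.le_add_left N0 k)) ?_
    exact (summable_nat_add_iff N0).2 hbase
  exact absurd (aux_dimH_Eset_le θ φ hφpos hφanti hφ0 s hs0 hsum) (not_le.2 hsd)
end

section
/- Let θ be an irrational number with convergent denominators {q_k}, φ : ℕ → ℝ⁺ monotone decreasing tending to zero, and 0 < s < 1. For each k let q_{k,s} be an integer m with q_k ≤ m < q_{k+1} minimizing q_k·(φ(q_k) + ((m − q_k)/q_k)·‖q_kθ‖)^s + Σ_{n=m+1}^{q_{k+1}−1} φ(n)^s. If Σ_{k=0}^∞ q_k·φ(q_k)^s < ∞ and Σ_{k=0}^∞ q_k·( ((q_{k,s} − q_k)/q_k)·‖q_kθ‖ )^s = ∞, then for every ε ∈ (0, s) there exist infinitely many k such that ((q_{k,s} − q_k)/q_k)·‖q_kθ‖ > max{ q_k^{−1/(s−ε)}, φ(q_k) }. -/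
open Filter

lemma sqrt2_pow_le_fib : ∀ n : ℕ, Real.sqrt 2 ^ n ≤ (Nat.fib (n + 2) : ℝ) := by
  have h2 : Real.sqrt 2 ≤ 2 := by
    nlinarith [Real.sq_sqrt (by norm_num : (2:ℝ) ≥ 0), Real.sqrt_nonneg 2]
  have hnn := Real.sqrt_nonneg 2
  intro n
  induction n using Nat.strong_induction_on with
  | _ n ih =>
    match n with
    | 0 => simp
    | 1 =>
      show Real.sqrt 2 ^ 1 ≤ ((Nat.fib 3 : ℕ) : ℝ)
      rw [pow_one, show Nat.fib 3 = 2 by decide]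
      exact_mod_cast h2
    | (m + 2) =>
      have h1 := ih m (by omega)
      have hsq : Real.sqrt 2 ^ (m + 2) = 2 * Real.sqrt 2 ^ m := by
        rw [pow_add, Real.sq_sqrt (by norm_num : (0:ℝ) ≤ 2)]; ring
      have hfle : (Nat.fib (m + 2) : ℝ) ≤ Nat.fib (m + 3) := by
        exact_mod_cast Nat.fib_le_fib_succ
      have : (Nat.fib (m + 4) : ℝ) = Nat.fib (m + 2) + Nat.fib (m + 3) := by
        exact_mod_cast Nat.fib_add_two
      rw [hsq, this]
      linarith

lemma fib_le_qden (θ : ℝ) (hθ : Irrational θ) (k : ℕ) : Nat.fib (k + 1) ≤ qden θ k := by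
  have hterm : ¬ (GenContFract.of θ).Terminates := by
    rw [GenContFract.terminates_iff_rat]
    rintro ⟨q, rfl⟩
    exact hθ ⟨q, rfl⟩
  have h : (Nat.fib (k + 1) : ℝ) ≤ (GenContFract.of θ).dens k := by
    apply GenContFract.succ_nth_fib_le_of_nth_den
    rcases k with _ | k
    · exact Or.inl rfl
    · exact Or.inr fun h => hterm ⟨_, h⟩
  exact Nat.le_floor h

lemma qden_pos_s16 (θ : ℝ) (hθ : Irrational θ) (k : ℕ) : 0 < qden θ k :=
  lt_of_lt_of_le (Nat.fib_pos.2 (Nat.succ_pos k)) (fib_le_qden θ hθ k)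

lemma summable_qden_rpow_neg (θ : ℝ) (hθ : Irrational θ) {δ : ℝ} (hδ : 0 < δ) :
    Summable (fun k => (qden θ k : ℝ) ^ (-δ)) := by
  rw [← summable_nat_add_iff 1]
  have hs2 : (1:ℝ) < Real.sqrt 2 := by
    nlinarith [Real.sq_sqrt (by norm_num : (0:ℝ) ≤ 2), Real.sqrt_nonneg 2]
  set r : ℝ := Real.sqrt 2 ^ (-δ) with hr
  have hr0 : 0 < r := Real.rpow_pos_of_pos (by positivity) _
  have hr1 : r < 1 := Real.rpow_lt_one_of_one_lt_of_neg hs2 (by linarith)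
  apply Summable.of_nonneg_of_le (fun k => (Real.rpow_nonneg (by positivity) _))
    (fun k => ?_) (summable_geometric_of_lt_one hr0.le hr1)
  have hq : (Real.sqrt 2 ^ k : ℝ) ≤ (qden θ (k + 1) : ℝ) := by
    calc (Real.sqrt 2 ^ k : ℝ) ≤ (Nat.fib (k + 2) : ℝ) := sqrt2_pow_le_fib k
    _ ≤ (qden θ (k + 1) : ℝ) := by exact_mod_cast fib_le_qden θ hθ (k + 1)
  calc (qden θ (k + 1) : ℝ) ^ (-δ) ≤ (Real.sqrt 2 ^ k : ℝ) ^ (-δ) :=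
        Real.rpow_le_rpow_of_nonpos (by positivity) hq (by linarith)
  _ = r ^ k := by
      rw [← Real.rpow_natCast (Real.sqrt 2) k, ← Real.rpow_mul (by positivity),
        mul_comm, Real.rpow_mul (by positivity), Real.rpow_natCast]

/-- The Claim in Case (ii): under the assumptions of case (ii), for every `0 < ε < s`
there are infinitely many `k` with
`((q_{k,s}-q_k)/q_k) ‖q_k θ‖ > max ( q_k^{-1/(s-ε)}, φ(q_k) )`. -/
theorem case_ii_claim (θ : ℝ) (hθ : Irrational θ) (φ : ℕ → ℝ)
    (hφpos : ∀ n, 0 < φ n) (hφanti : Antitone φ)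
    (hφ0 : Tendsto φ atTop (nhds 0))
    (s : ℝ) (hs0 : 0 < s) (hs1 : s < 1)
    (Q : ℕ → ℕ)
    (hQmem : ∀ k, qden θ k ≤ Q k ∧ Q k < qden θ (k + 1))
    (hQmin : ∀ k, ∀ m, qden θ k ≤ m → m < qden θ (k + 1) →
      cost θ φ s k (Q k) ≤ cost θ φ s k m)
    (hconv : Summable fun k => (qden θ k : ℝ) * φ (qden θ k) ^ s)
    (hdiv : ¬ Summable fun k => (qden θ k : ℝ) *
      ((((Q k : ℝ) - (qden θ k : ℝ)) / (qden θ k : ℝ)) * nint ((qden θ k : ℝ) * θ)) ^ s) :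
    ∀ ε : ℝ, 0 < ε → ε < s →
      {k : ℕ | max ((qden θ k : ℝ) ^ (-(1 / (s - ε)))) (φ (qden θ k)) <
        (((Q k : ℝ) - (qden θ k : ℝ)) / (qden θ k : ℝ)) * nint ((qden θ k : ℝ) * θ)}.Infinite := by
  intro ε hε0 hεs
  set x : ℕ → ℝ := fun k =>
    (((Q k : ℝ) - (qden θ k : ℝ)) / (qden θ k : ℝ)) * nint ((qden θ k : ℝ) * θ) with hxdef
  have hsε : 0 < s - ε := by linarith
  have hqpos : ∀ k, (0:ℝ) < (qden θ k : ℝ) := fun k => by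
    exact_mod_cast qden_pos_s16 θ hθ k
  have hxnn : ∀ k, 0 ≤ x k := fun k => by
    apply mul_nonneg
    · apply div_nonneg _ (hqpos k).le
      have := (hQmem k).1
      have : ((qden θ k : ℝ)) ≤ (Q k : ℝ) := by exact_mod_cast this
      linarith
    · exact abs_nonneg _
  by_contra hfin
  rw [Set.not_infinite] at hfin
  obtain ⟨N, hN⟩ := hfin.bddAbove
  apply hdiv
  set δ : ℝ := ε / (s - ε) with hδdef
  have hδ : 0 < δ := div_pos hε0 hsε
  have hg : Summable (fun k => (qden θ k : ℝ) ^ (-δ) + (qden θ k : ℝ) * φ (qden θ k) ^ s) :=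
    (summable_qden_rpow_neg θ hθ hδ).add hconv
  rw [← summable_nat_add_iff (N + 1)]
  refine Summable.of_nonneg_of_le
    (fun k => mul_nonneg (hqpos _).le (Real.rpow_nonneg (hxnn _) _))
    (fun k => ?_) ((summable_nat_add_iff (N + 1)).2 hg)
  set j := k + (N + 1) with hjdef
  have hjS : j ∉ {k : ℕ | max ((qden θ k : ℝ) ^ (-(1 / (s - ε)))) (φ (qden θ k)) < x k} := by
    intro hj
    have := hN hj
    omega
  have hle : x j ≤ max ((qden θ j : ℝ) ^ (-(1 / (s - ε)))) (φ (qden θ j)) := not_lt.1 hjS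
  rcases le_max_iff.1 hle with h | h
  · have h1 : x j ^ s ≤ ((qden θ j : ℝ) ^ (-(1 / (s - ε)))) ^ s :=
      Real.rpow_le_rpow (hxnn j) h hs0.le
    have h2 : (qden θ j : ℝ) * ((qden θ j : ℝ) ^ (-(1 / (s - ε)))) ^ s
        = (qden θ j : ℝ) ^ (-δ) := by
      have hne : s - ε ≠ 0 := hsε.ne'
      rw [← Real.rpow_mul (hqpos j).le]
      nth_rewrite 1 [← Real.rpow_one ((qden θ j : ℝ))]
      rw [← Real.rpow_add (hqpos j)]
      congr 1
      rw [hδdef]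
      field_simp
      ring
    calc (qden θ j : ℝ) * x j ^ s ≤ (qden θ j : ℝ) * ((qden θ j : ℝ) ^ (-(1 / (s - ε)))) ^ s :=
          mul_le_mul_of_nonneg_left h1 (hqpos j).le
      _ = (qden θ j : ℝ) ^ (-δ) := h2
      _ ≤ _ := le_add_of_nonneg_right
          (mul_nonneg (hqpos j).le (Real.rpow_nonneg (hφpos _).le _))
  · have h1 : x j ^ s ≤ φ (qden θ j) ^ s := Real.rpow_le_rpow (hxnn j) h hs0.le
    calc (qden θ j : ℝ) * x j ^ s ≤ (qden θ j : ℝ) * φ (qden θ j) ^ s :=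
          mul_le_mul_of_nonneg_left h1 (hqpos j).le
      _ ≤ _ := le_add_of_nonneg_left (Real.rpow_nonneg (hqpos j).le _)
end

section
/- Let θ be an irrational number with convergent denominators {q_k}, φ : ℕ → ℝ⁺ monotone decreasing tending to zero, and 0 < s < 1. For each k let q_{k,s} be an integer m with q_k ≤ m < q_{k+1} minimizing q_k·(φ(q_k) + ((m − q_k)/q_k)·‖q_kθ‖)^s + Σ_{n=m+1}^{q_{k+1}−1} φ(n)^s. If q_{k,s} ≥ q_k + 1, then φ(q_{k,s})^s > s·‖q_kθ‖·( φ(q_k) + ((q_{k,s} − q_k)/q_k)·‖q_kθ‖ )^{s−1}. -/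
open Filter

/-- The estimate on `φ(q_{k,s})` in Case (ii): if `q_{k,s} ≥ q_k + 1` then
`φ(q_{k,s})^s > s ‖q_k θ‖ (φ(q_k) + ((q_{k,s}-q_k)/q_k) ‖q_k θ‖)^{s-1}`. -/
theorem phi_qks_lower_bound (θ : ℝ) (hθ : Irrational θ) (φ : ℕ → ℝ)
    (hφpos : ∀ n, 0 < φ n) (hφanti : Antitone φ)
    (hφ0 : Tendsto φ atTop (nhds 0))
    (s : ℝ) (hs0 : 0 < s) (hs1 : s < 1) (k : ℕ)
    (Q : ℕ)
    (hQmem : qden θ k ≤ Q ∧ Q < qden θ (k + 1))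
    (hQmin : ∀ m, qden θ k ≤ m → m < qden θ (k + 1) →
      cost θ φ s k Q ≤ cost θ φ s k m)
    (hQgt : qden θ k + 1 ≤ Q) :
    s * nint ((qden θ k : ℝ) * θ) *
        (φ (qden θ k) +
          (((Q : ℝ) - (qden θ k : ℝ)) / (qden θ k : ℝ)) * nint ((qden θ k : ℝ) * θ)) ^ (s - 1) <
      φ Q ^ s := by
  -- notation
  set q : ℕ := qden θ k with hqdef
  set N : ℝ := nint ((q : ℝ) * θ) with hNdef
  -- q ≥ 1
  have hnotterm : ∀ n, ¬ (GenContFract.of θ).TerminatedAt n := by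
    intro n hn
    have hterm : (GenContFract.of θ).Terminates := ⟨n, hn⟩
    obtain ⟨r, hr⟩ := (GenContFract.terminates_iff_rat θ).mp hterm
    exact hθ ⟨r, hr.symm⟩
  have hdens1 : (1 : ℝ) ≤ (GenContFract.of θ).dens k := by
    have := GenContFract.succ_nth_fib_le_of_nth_den (v := θ) (n := k)
      (Or.inr (hnotterm _))
    refine le_trans ?_ this
    have h1 : 1 ≤ Nat.fib (k + 1) := Nat.fib_pos.mpr (Nat.succ_pos k)
    exact_mod_cast h1
  have hq1 : 1 ≤ q := Nat.le_floor (by exact_mod_cast hdens1)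
  have hq0 : (0 : ℝ) < (q : ℝ) := by exact_mod_cast hq1
  -- N > 0
  have hN0 : 0 < N := by
    have hirr : Irrational ((q : ℝ) * θ) := hθ.natCast_mul (by omega)
    have : (q : ℝ) * θ ≠ (round ((q : ℝ) * θ) : ℤ) := hirr.ne_int _
    have : (q : ℝ) * θ - round ((q : ℝ) * θ) ≠ 0 := sub_ne_zero.mpr this
    simpa [hNdef, nint] using abs_pos.mpr this
  -- the two base points
  set a : ℝ := φ q + (((Q : ℝ) - (q : ℝ)) / (q : ℝ)) * N with hadef
  set b : ℝ := φ q + ((((Q : ℝ) - 1) - (q : ℝ)) / (q : ℝ)) * N with hbdef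
  have hQ1 : 1 ≤ Q := by omega
  have hQr : (q : ℝ) ≤ (Q : ℝ) - 1 := by
    have : (q : ℝ) + 1 ≤ (Q : ℝ) := by exact_mod_cast hQgt
    linarith
  have hb0 : 0 < b := by
    have h1 : 0 ≤ ((((Q : ℝ) - 1) - (q : ℝ)) / (q : ℝ)) * N :=
      mul_nonneg (div_nonneg (by linarith) hq0.le) hN0.le
    have := hφpos q
    rw [hbdef]; linarith
  have hab : a - b = N / q := by
    rw [hadef, hbdef]; field_simp; ring
  have hba : b < a := by
    have h1 : 0 < N / q := div_pos hN0 hq0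
    exact sub_pos.mp (by rw [hab]; exact h1)
  have ha0 : 0 < a := lt_trans hb0 hba
  -- cost comparison at Q - 1
  have hcost := hQmin (Q - 1) (by omega) (by omega)
  have hcast : ((Q - 1 : ℕ) : ℝ) = (Q : ℝ) - 1 := by
    push_cast [Nat.cast_sub hQ1]; ring
  have hsum : ∑ n ∈ Finset.Ico (Q - 1 + 1) (qden θ (k + 1)), φ n ^ s
      = φ Q ^ s + ∑ n ∈ Finset.Ico (Q + 1) (qden θ (k + 1)), φ n ^ s := by
    have h1 : Q - 1 + 1 = Q := by omega
    rw [h1, Finset.sum_eq_sum_Ico_succ_bot hQmem.2]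
  have hkey : (q : ℝ) * (a ^ s - b ^ s) ≤ φ Q ^ s := by
    have h := hcost
    simp only [cost, hcast, ← hqdef, ← hNdef, ← hadef, ← hbdef, hsum] at h
    nlinarith [h]
  -- mean value theorem
  have hderiv : ∀ x ∈ Set.Icc b a, HasDerivAt (fun x : ℝ => x ^ s)
      (s * x ^ (s - 1)) x := by
    intro x hx
    exact Real.hasDerivAt_rpow_const (Or.inl (ne_of_gt (lt_of_lt_of_le hb0 hx.1)))
  obtain ⟨c, hc, hceq⟩ := exists_hasDerivAt_eq_slope (fun x : ℝ => x ^ s)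
    (fun x => s * x ^ (s - 1)) hba
    (fun x hx => ((hderiv x hx).continuousAt).continuousWithinAt)
    (fun x hx => hderiv x ⟨hx.1.le, hx.2.le⟩)
  have hc0 : 0 < c := lt_trans hb0 hc.1
  have hslope : a ^ s - b ^ s = s * c ^ (s - 1) * (a - b) := by
    have hne : a - b ≠ 0 := by linarith [hba]
    field_simp at hceq
    nlinarith [hceq]
  -- a^{s-1} < c^{s-1}
  have hlt : a ^ (s - 1) < c ^ (s - 1) :=
    Real.rpow_lt_rpow_of_neg hc0 hc.2 (by linarith)
  have hfinal : s * N * a ^ (s - 1) < (q : ℝ) * (a ^ s - b ^ s) := by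
    rw [hslope, hab]
    have : (q : ℝ) * (s * c ^ (s - 1) * (N / q)) = s * N * c ^ (s - 1) := by
      field_simp
    rw [this]
    have hsN : 0 < s * N := mul_pos hs0 hN0
    exact (mul_lt_mul_iff_right₀ hsN).mpr hlt
  calc s * N * a ^ (s - 1) < (q : ℝ) * (a ^ s - b ^ s) := hfinal
    _ ≤ φ Q ^ s := hkey
end

section
/- Let θ be an irrational number with convergent denominators {q_k}. For every positive integer k, the gap between any two circularly neighboring points of the set { ⟨θ⟩, ⟨2θ⟩, …, ⟨q_{k+1}θ⟩ } on the unit circle ℝ/ℤ is either ‖q_kθ‖ or ‖q_kθ‖ + ‖q_{k+1}θ‖. -/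
open Filter

namespace ThreeDistAux

open GenContFract

variable {θ : ℝ}

lemma not_terminatedAt (hθ : Irrational θ) (n : ℕ) : ¬(GenContFract.of θ).TerminatedAt n := by
  intro h
  rcases (terminates_iff_rat θ).mp ⟨n, h⟩ with ⟨q, hq⟩
  exact hθ ⟨q, hq.symm⟩

lemma stream_some (hθ : Irrational θ) (n : ℕ) :
    ∃ ifp, IntFractPair.stream θ n = some ifp := by
  cases n with
  | zero => exact ⟨_, IntFractPair.stream_zero θ⟩
  | succ n =>
    cases hs : IntFractPair.stream θ (n + 1) with
    | some ifp => exact ⟨ifp, rfl⟩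
    | none =>
      exact absurd (of_terminatedAt_n_iff_succ_nth_intFractPair_stream_eq_none.mpr hs)
        (not_terminatedAt hθ n)

lemma stream_fr_irrational (hθ : Irrational θ) :
    ∀ n ifp, IntFractPair.stream θ n = some ifp → Irrational ifp.fr := by
  intro n
  induction n with
  | zero =>
    intro ifp h
    rw [IntFractPair.stream_zero, Option.some_inj] at h
    subst h
    exact (hθ.sub_intCast ⌊θ⌋)
  | succ n ih =>
    intro ifp h
    rcases IntFractPair.succ_nth_stream_eq_some_iff.mp h with ⟨p, hp, hfr, rfl⟩
    exact ((ih p hp).inv).sub_intCast _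

lemma s_get (hθ : Irrational θ) (n : ℕ) :
    ∃ β : ℤ, 1 ≤ β ∧ (GenContFract.of θ).s.get? n = some ⟨1, (β : ℝ)⟩ := by
  obtain ⟨ifp, hifp⟩ := stream_some hθ (n + 1)
  exact ⟨ifp.b, IntFractPair.one_le_succ_nth_stream_b hifp,
    get?_of_eq_some_of_succ_get?_intFractPair_stream hifp⟩

lemma contsAux_int (hθ : Irrational θ) :
    ∀ n, ∃ pa pb : ℤ, (GenContFract.of θ).contsAux n = ⟨(pa : ℝ), (pb : ℝ)⟩ := by
  intro n
  induction n using Nat.twoStepInduction with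
  | zero => exact ⟨1, 0, by simp [zeroth_contAux_eq_one_zero]⟩
  | one => exact ⟨⌊θ⌋, 1, by simp [first_contAux_eq_h_one, of_h_eq_floor]⟩
  | more n ih1 ih2 =>
    obtain ⟨pa, pb, h1⟩ := ih1
    obtain ⟨qa, qb, h2⟩ := ih2
    obtain ⟨β, hβ, hs⟩ := s_get hθ n
    refine ⟨β * qa + pa, β * qb + pb, ?_⟩
    rw [contsAux_recurrence hs h1 h2]
    simp only [GenContFract.Pair.mk.injEq]
    constructor <;> push_cast <;> ring

lemma nums_int (hθ : Irrational θ) (n : ℕ) :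
    ∃ p : ℤ, (GenContFract.of θ).nums n = (p : ℝ) := by
  obtain ⟨pa, pb, h⟩ := contsAux_int hθ (n + 1)
  exact ⟨pa, by rw [num_eq_conts_a, nth_cont_eq_succ_nth_contAux, h]⟩

lemma qden_eq (hθ : Irrational θ) (n : ℕ) :
    ((qden θ n : ℕ) : ℝ) = (GenContFract.of θ).dens n := by
  obtain ⟨pa, pb, h⟩ := contsAux_int hθ (n + 1)
  have hd : (GenContFract.of θ).dens n = (pb : ℝ) := by
    rw [den_eq_conts_b, nth_cont_eq_succ_nth_contAux, h]
  have hnn : (0 : ℝ) ≤ (pb : ℝ) := hd ▸ zero_le_of_den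
  have hpb : (0 : ℤ) ≤ pb := by exact_mod_cast hnn
  rw [qden, hd, ← Int.floor_toNat, Int.floor_intCast]
  exact_mod_cast Int.toNat_of_nonneg hpb

lemma fib_le_qden (hθ : Irrational θ) (n : ℕ) : Nat.fib (n + 1) ≤ qden θ n := by
  have h : (Nat.fib (n + 1) : ℝ) ≤ (GenContFract.of θ).dens n :=
    succ_nth_fib_le_of_nth_den (Or.inr (not_terminatedAt hθ _))
  rw [← qden_eq hθ] at h
  exact_mod_cast h

lemma one_le_qden (hθ : Irrational θ) (n : ℕ) : 1 ≤ qden θ n :=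
  le_trans (Nat.fib_pos.mpr n.succ_pos) (fib_le_qden hθ n)

lemma two_le_qden (hθ : Irrational θ) {n : ℕ} (hn : 2 ≤ n) : 2 ≤ qden θ n := by
  have : Nat.fib 3 ≤ Nat.fib (n + 1) := Nat.fib_mono (by omega)
  have h2 : Nat.fib 3 = 2 := rfl
  have h3 := fib_le_qden hθ n
  omega

lemma qden_mono (hθ : Irrational θ) (n : ℕ) : qden θ n ≤ qden θ (n + 1) := by
  have h := of_den_mono (v := θ) (n := n)
  rw [← qden_eq hθ, ← qden_eq hθ] at h
  exact_mod_cast h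

lemma dens_add_le (hθ : Irrational θ) (n : ℕ) :
    (GenContFract.of θ).dens n + (GenContFract.of θ).dens (n + 1) ≤
      (GenContFract.of θ).dens (n + 2) := by
  obtain ⟨β, hβ, hs⟩ := s_get hθ (n + 1)
  have h := dens_recurrence hs rfl rfl
  have h1 : (1 : ℝ) ≤ (β : ℝ) := by exact_mod_cast hβ
  have h2 : (0 : ℝ) ≤ (GenContFract.of θ).dens (n + 1) := zero_le_of_den
  rw [h]
  dsimp only
  nlinarith

lemma pos_dens (hθ : Irrational θ) (n : ℕ) : (0:ℝ) < (GenContFract.of θ).dens n := by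
  rw [← qden_eq hθ]
  exact_mod_cast one_le_qden hθ n

lemma error (hθ : Irrational θ) (n : ℕ) :
    ∃ r : ℝ, 0 < r ∧
      1 / ((GenContFract.of θ).dens (n + 1) + (GenContFract.of θ).dens n) < r ∧
      r < 1 / (GenContFract.of θ).dens (n + 1) ∧
      (GenContFract.of θ).dens n * θ - (GenContFract.of θ).nums n = (-1) ^ n * r := by
  obtain ⟨ifp, hifp⟩ := stream_some hθ n
  have hirr := stream_fr_irrational hθ n ifp hifp
  have hfr0 : ifp.fr ≠ 0 := hirr.ne_zero
  have hfrpos : 0 < ifp.fr := lt_of_le_of_ne (IntFractPair.nth_stream_fr_nonneg hifp) (Ne.symm hfr0)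
  have hfrlt : ifp.fr < 1 := IntFractPair.nth_stream_fr_lt_one hifp
  have hinv1 : 1 < ifp.fr⁻¹ := (one_lt_inv₀ hfrpos).mpr hfrlt
  -- the next point of the stream
  have hstream' : IntFractPair.stream θ (n + 1) = some (IntFractPair.of ifp.fr⁻¹) :=
    IntFractPair.stream_succ_of_some hifp hfr0
  have hs : (GenContFract.of θ).s.get? n = some ⟨1, ((IntFractPair.of ifp.fr⁻¹).b : ℝ)⟩ :=
    get?_of_eq_some_of_succ_get?_intFractPair_stream hstream'
  set t : ℝ := ifp.fr⁻¹ with ht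
  have hbfloor : (IntFractPair.of ifp.fr⁻¹).b = ⌊t⌋ := rfl
  -- continuants
  set B : ℝ := (GenContFract.of θ).dens n with hB
  set pB : ℝ := ((GenContFract.of θ).contsAux n).b with hpB
  have hBaux : ((GenContFract.of θ).contsAux (n + 1)).b = B := by
    rw [hB, den_eq_conts_b, nth_cont_eq_succ_nth_contAux]
  have hpB0 : 0 ≤ pB := zero_le_of_contsAux_b
  have hB0 : 0 < B := pos_dens hθ n
  have hB1 : 0 < (GenContFract.of θ).dens (n + 1) := pos_dens hθ (n + 1)
  -- recurrence for dens (n+1)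
  have hrec := contsAux_recurrence hs rfl rfl
  have hdens1 : (GenContFract.of θ).dens (n + 1) = (⌊t⌋ : ℝ) * B + pB := by
    rw [den_eq_conts_b, nth_cont_eq_succ_nth_contAux, hrec]
    show ((IntFractPair.of t).b : ℝ) * ((GenContFract.of θ).contsAux (n+1)).b
        + 1 * ((GenContFract.of θ).contsAux n).b = _
    rw [hBaux, show (IntFractPair.of t).b = ⌊t⌋ from rfl, ← hpB]
    ring
  -- error formula
  have tmp := sub_convs_eq hifp
  simp only [if_neg hfr0] at tmp
  rw [hBaux] at tmp
  have htirr : Irrational t := hirr.inv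
  have hfloor_lt : (⌊t⌋ : ℝ) < t := lt_of_le_of_ne (Int.floor_le t) (htirr.ne_int ⌊t⌋).symm
  have hlt_floor : t < (⌊t⌋ : ℝ) + 1 := Int.lt_floor_add_one t
  set denom : ℝ := t * B + pB with hdenom
  have hdenom_lt : (GenContFract.of θ).dens (n + 1) < denom := by
    rw [hdens1, hdenom]; nlinarith
  have hdenom_lt2 : denom < (GenContFract.of θ).dens (n + 1) + B := by
    rw [hdens1, hdenom]; nlinarith
  have hdenom_pos : 0 < denom := lt_trans hB1 hdenom_lt
  refine ⟨1 / denom, by positivity, ?_, ?_, ?_⟩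
  · exact one_div_lt_one_div_of_lt hdenom_pos hdenom_lt2
  · exact one_div_lt_one_div_of_lt hB1 hdenom_lt
  · have hconv : (GenContFract.of θ).convs n =
        (GenContFract.of θ).nums n / (GenContFract.of θ).dens n := conv_eq_num_div_den
    rw [hconv] at tmp
    have hBne : B ≠ 0 := ne_of_gt hB0
    have hdne : denom ≠ 0 := ne_of_gt hdenom_pos
    set N : ℝ := (GenContFract.of θ).nums n with hN
    rw [show (GenContFract.of θ).dens n = B from rfl] at tmp
    have h3 : B * (θ - N / B) = B * θ - N := by field_simp; try ring
    have h4 : B * ((-1 : ℝ) ^ n / (B * denom)) = (-1) ^ n * (1 / denom) := by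
      field_simp
      try ring
    show B * θ - N = (-1) ^ n * (1 / denom)
    calc B * θ - N = B * (θ - N / B) := h3.symm
    _ = B * ((-1) ^ n / (B * denom)) := by rw [tmp]
    _ = _ := h4


lemma det_real (hθ : Irrational θ) (n : ℕ) :
    (GenContFract.of θ).nums n * (GenContFract.of θ).dens (n + 1) -
      (GenContFract.of θ).dens n * (GenContFract.of θ).nums (n + 1) = (-1) ^ (n + 1) :=
  SimpContFract.determinant (s := SimpContFract.of θ) (not_terminatedAt hθ n)

/-- helper: identifying round -/
lemma round_eq_of (x : ℝ) (m : ℤ) (h : |x - m| < 1 / 2) : round x = m := by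
  rw [abs_lt] at h
  rw [round_eq, Int.floor_eq_iff]
  constructor <;> push_cast <;> linarith [h.1, h.2]

/-- helper: identifying fract -/
lemma fract_eq_of {x t : ℝ} (c : ℤ) (h0 : 0 ≤ t) (h1 : t < 1) (hx : x = c + t) :
    Int.fract x = t := by
  rw [hx, Int.fract_intCast_add, Int.fract_eq_self.mpr ⟨h0, h1⟩]

/-- Master data lemma collecting all number-theoretic input at level `k`. -/
lemma master (hθ : Irrational θ) {k : ℕ} (hk : 1 ≤ k) :
    ∃ (P Q : ℤ) (r r' ε : ℝ),
      (ε = 1 ∨ ε = -1) ∧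
      0 < r' ∧ r' < r ∧ r < 1 / 2 ∧
      2 * r + r' ≤ 1 ∧
      (qden θ k : ℝ) * θ - P = ε * r ∧
      (qden θ (k + 1) : ℝ) * θ - Q = -(ε * r') ∧
      (P * (qden θ (k + 1) : ℤ) - (qden θ k : ℤ) * Q = 1 ∨
        P * (qden θ (k + 1) : ℤ) - (qden θ k : ℤ) * Q = -1) ∧
      nint ((qden θ k : ℝ) * θ) = r ∧
      nint ((qden θ (k + 1) : ℝ) * θ) = r' := by
  obtain ⟨P, hP⟩ := nums_int hθ k
  obtain ⟨Q, hQ⟩ := nums_int hθ (k + 1)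
  obtain ⟨r, hr0, hrlow, hrhigh, hre⟩ := error hθ k
  obtain ⟨r', hr'0, hr'low, hr'high, hr'e⟩ := error hθ (k + 1)
  set A : ℝ := (GenContFract.of θ).dens k with hA
  set B : ℝ := (GenContFract.of θ).dens (k + 1) with hB
  set C : ℝ := (GenContFract.of θ).dens (k + 2) with hC
  rw [hP] at hre
  rw [hQ] at hr'e
  have hAq : ((qden θ k : ℕ) : ℝ) = A := qden_eq hθ k
  have hBq : ((qden θ (k + 1) : ℕ) : ℝ) = B := qden_eq hθ (k + 1)
  have hA1 : (1 : ℝ) ≤ A := by rw [← hAq]; exact_mod_cast one_le_qden hθ k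
  have hB2 : (2 : ℝ) ≤ B := by rw [← hBq]; exact_mod_cast two_le_qden hθ (by omega)
  have hA0 : (0 : ℝ) < A := lt_of_lt_of_le one_pos hA1
  have hB0 : (0 : ℝ) < B := lt_of_lt_of_le two_pos hB2
  have hC0 : (0 : ℝ) < C := pos_dens hθ (k + 2)
  -- r' < r
  have hAB_le_C : A + B ≤ C := by
    have := dens_add_le hθ k
    rw [← hA, ← hB, ← hC] at this
    exact this
  have hr'r : r' < r := by
    have h2 : 1 / C ≤ 1 / (B + A) := one_div_le_one_div_of_le (by linarith) (by linarith)
    calc r' < 1 / C := hr'high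
    _ ≤ 1 / (B + A) := h2
    _ < r := hrlow
  have hrhalf : r < 1 / 2 := by
    have h2 : 1 / B ≤ 1 / 2 := one_div_le_one_div_of_le two_pos hB2
    exact lt_of_lt_of_le hrhigh h2
  -- the identity B r + A r' = 1
  have hdet := det_real hθ k
  rw [hP, hQ, ← hA, ← hB] at hdet
  have hident : B * r + A * r' = 1 := by
    have h2 : (P : ℝ) * B - A * Q = (-1 : ℝ) ^ (k + 1) := by linarith [hdet]
    have h1 : B * ((-1 : ℝ) ^ k * r) - A * ((-1 : ℝ) ^ (k + 1) * r') = -(-1 : ℝ) ^ (k + 1) := by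
      rw [← hre, ← hr'e, ← h2]; ring
    rcases Nat.even_or_odd k with he | ho
    · have e1 : ((-1 : ℝ)) ^ k = 1 := he.neg_one_pow
      have e2 : ((-1 : ℝ)) ^ (k + 1) = -1 := he.add_one.neg_one_pow
      rw [e1, e2] at h1; linarith
    · have e1 : ((-1 : ℝ)) ^ k = -1 := ho.neg_one_pow
      have e2 : ((-1 : ℝ)) ^ (k + 1) = 1 := ho.add_one.neg_one_pow
      rw [e1, e2] at h1; linarith
  have h2r : 2 * r + r' ≤ 1 := by nlinarith
  -- determinant as integers
  have hdetZ : P * (qden θ (k + 1) : ℤ) - (qden θ k : ℤ) * Q = 1 ∨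
      P * (qden θ (k + 1) : ℤ) - (qden θ k : ℤ) * Q = -1 := by
    have hcast : ((P * (qden θ (k + 1) : ℤ) - (qden θ k : ℤ) * Q : ℤ) : ℝ)
        = (-1 : ℝ) ^ (k + 1) := by
      push_cast
      rw [hAq, hBq]
      linarith [hdet]
    rcases Nat.even_or_odd (k + 1) with he | ho
    · left
      rw [he.neg_one_pow] at hcast
      exact_mod_cast hcast
    · right
      rw [ho.neg_one_pow] at hcast
      exact_mod_cast hcast
  -- sign ε
  set ε : ℝ := (-1 : ℝ) ^ k with hε
  have hεpm : ε = 1 ∨ ε = -1 := by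
    rcases Nat.even_or_odd k with he | ho
    · exact Or.inl he.neg_one_pow
    · exact Or.inr ho.neg_one_pow
  have hea : (qden θ k : ℝ) * θ - P = ε * r := by rw [hAq, hre, hε]
  have heb : (qden θ (k + 1) : ℝ) * θ - Q = -(ε * r') := by
    rw [hBq, hr'e, hε, pow_succ]
    ring
  -- nint values
  have h_na : nint ((qden θ k : ℝ) * θ) = r := by
    have habs : |(qden θ k : ℝ) * θ - P| = r := by
      rw [hea]
      rcases hεpm with h | h <;> rw [h]
      · rw [one_mul, abs_of_pos hr0]
      · rw [neg_one_mul, abs_neg, abs_of_pos hr0]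
    have hround : round ((qden θ k : ℝ) * θ) = P :=
      round_eq_of _ _ (by rw [habs]; linarith)
    rw [nint, hround, habs]
  have h_nb : nint ((qden θ (k + 1) : ℝ) * θ) = r' := by
    have habs : |(qden θ (k + 1) : ℝ) * θ - Q| = r' := by
      rw [heb]
      rcases hεpm with h | h <;> rw [h]
      · rw [abs_neg, one_mul, abs_of_pos hr'0]
      · rw [show (-(-1 * r') : ℝ) = r' by ring, abs_of_pos hr'0]
    have hround : round ((qden θ (k + 1) : ℝ) * θ) = Q :=
      round_eq_of _ _ (by rw [habs]; linarith)
    rw [nint, hround, habs]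
  exact ⟨P, Q, r, r', ε, hεpm, hr'0, hr'r, hrhalf, h2r, hea, heb, hdetZ, h_na, h_nb⟩


/-- Key arithmetic lemma: best-approximation lower bound and gap-value characterization. -/
lemma key {θ r r' ε : ℝ} {a b P Q : ℤ}
    (ha : 1 ≤ a) (hab : a ≤ b)
    (hεpm : ε = 1 ∨ ε = -1)
    (hr'0 : 0 < r') (hr'r : r' < r)
    (hea : (a : ℝ) * θ - P = ε * r)
    (heb : (b : ℝ) * θ - Q = -(ε * r'))
    (hdet : P * b - a * Q = 1 ∨ P * b - a * Q = -1)
    (j p : ℤ) (hj0 : j ≠ 0) (hjb : |j| < b) :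
    r ≤ |(j : ℝ) * θ - p| ∧
      (0 < (j : ℝ) * θ - p → (j : ℝ) * θ - p ≤ r + r' →
        ((j : ℝ) * θ - p = r ∨ (j : ℝ) * θ - p = r + r')) := by
  have hr0 : 0 < r := hr'0.trans hr'r
  have hb1 : (1 : ℤ) ≤ b := le_trans ha hab
  have hjlt := abs_lt.mp hjb
  obtain ⟨D, hDdef, hDD⟩ : ∃ D : ℤ, D = P * b - a * Q ∧ D * D = 1 := by
    refine ⟨P * b - a * Q, rfl, ?_⟩
    rcases hdet with h | h <;> rw [h] <;> ring
  set x : ℤ := D * (b * p - Q * j) with hxdef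
  set y : ℤ := D * (P * j - a * p) with hydef
  have hxa : x * a + y * b = j := by
    have h0 : x * a + y * b = D * D * j := by rw [hxdef, hydef, hDdef]; ring
    rw [hDD, one_mul] at h0
    exact h0
  have hxp : x * P + y * Q = p := by
    have h0 : x * P + y * Q = D * D * p := by rw [hxdef, hydef, hDdef]; ring
    rw [hDD, one_mul] at h0
    exact h0
  have hreal : (j : ℝ) * θ - p = (x : ℝ) * ((a : ℝ) * θ - P) + (y : ℝ) * ((b : ℝ) * θ - Q) := by
    have hj' : (x : ℝ) * a + (y : ℝ) * b = (j : ℝ) := by exact_mod_cast hxa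
    have hp' : (x : ℝ) * P + (y : ℝ) * Q = (p : ℝ) := by exact_mod_cast hxp
    rw [← hj', ← hp']
    ring
  rw [hea, heb] at hreal
  rcases eq_or_ne y 0 with hy | hy
  · -- y = 0 : multiple of q_k
    have hx0 : x ≠ 0 := by
      intro hx
      rw [hx, hy] at hxa
      simp at hxa
      exact hj0 hxa.symm
    obtain ⟨u, hu, hu0⟩ : ∃ u : ℤ, ((u : ℝ)) = (x : ℝ) * ε ∧ u ≠ 0 := by
      rcases hεpm with h | h <;> subst h
      · exact ⟨x, by ring, hx0⟩
      · exact ⟨-x, by push_cast; ring, neg_ne_zero.mpr hx0⟩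
    have hd : (j : ℝ) * θ - p = (u : ℝ) * r := by
      rw [hreal, hy]
      push_cast
      linear_combination (-r) * hu
    have hu1 : (1 : ℤ) ≤ |u| := Int.one_le_abs hu0
    have hu1R : (1 : ℝ) ≤ |(u : ℝ)| := by exact_mod_cast hu1
    constructor
    · rw [hd, abs_mul, abs_of_pos hr0]
      nlinarith [mul_le_mul_of_nonneg_right hu1R hr0.le]
    · intro hpos hle
      rw [hd] at hpos hle ⊢
      have hupos : (0 : ℝ) < (u : ℝ) := by nlinarith
      have huZ : (0 : ℤ) < u := by exact_mod_cast hupos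
      have hu2R : (u : ℝ) < 2 := by nlinarith
      have hu2 : u < 2 := by exact_mod_cast hu2R
      have hu1 : u = 1 := by omega
      left
      rw [show ((u : ℝ)) = 1 by exact_mod_cast hu1]
      ring
  · -- y ≠ 0
    rcases eq_or_ne x 0 with hx | hx
    · exfalso
      rw [hx, zero_mul, zero_add] at hxa
      have h1 : (1 : ℤ) ≤ |y| := Int.one_le_abs hy
      have : |j| = |y| * b := by rw [← hxa, abs_mul, abs_of_pos (by omega : (0:ℤ) < b)]
      nlinarith
    · -- both nonzero: x * y < 0
      have hxy : x * y < 0 := by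
        rcases lt_trichotomy (x * y) 0 with h | h | h
        · exact h
        · exact absurd (mul_eq_zero.mp h) (by push_neg; exact ⟨hx, hy⟩)
        · exfalso
          rcases mul_pos_iff.mp h with ⟨hx1, hy1⟩ | ⟨hx1, hy1⟩
          · have h1 : a ≤ x * a := le_mul_of_one_le_left (by linarith) hx1
            have h2 : b ≤ y * b := le_mul_of_one_le_left (by linarith) hy1
            omega
          · have h1 : x * a ≤ -a := by nlinarith
            have h2 : y * b ≤ -b := by nlinarith
            omega
      obtain ⟨u, w, hu, hw, huw⟩ : ∃ u w : ℤ, ((u : ℝ)) = (x : ℝ) * ε ∧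
          ((w : ℝ)) = -(y : ℝ) * ε ∧ 0 < u * w := by
        rcases hεpm with h | h <;> subst h
        · exact ⟨x, -y, by ring, by push_cast; ring, by nlinarith⟩
        · exact ⟨-x, y, by push_cast; ring, by push_cast; ring, by nlinarith⟩
      have hd : (j : ℝ) * θ - p = (u : ℝ) * r + (w : ℝ) * r' := by
        rw [hreal]
        linear_combination (-r) * hu + (-r') * hw
      rcases mul_pos_iff.mp huw with ⟨hu1, hw1⟩ | ⟨hu1, hw1⟩
      · have hu1R : (1 : ℝ) ≤ (u : ℝ) := by exact_mod_cast hu1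
        have hw1R : (1 : ℝ) ≤ (w : ℝ) := by exact_mod_cast hw1
        have hge : r + r' ≤ (j : ℝ) * θ - p := by rw [hd]; nlinarith
        constructor
        · rw [abs_of_pos (by linarith)]
          linarith
        · intro _ hle
          right
          linarith
      · have hu1R : (u : ℝ) ≤ -1 := by exact_mod_cast (by omega : u ≤ -1)
        have hw1R : (w : ℝ) ≤ -1 := by exact_mod_cast (by omega : w ≤ -1)
        have hle : (j : ℝ) * θ - p ≤ -(r + r') := by rw [hd]; nlinarith
        constructor
        · rw [abs_of_neg (by linarith)]
          linarith
        · intro hpos _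
          linarith


end ThreeDistAux

open ThreeDistAux

/-- The Three Distances Theorem in the special case `N = q_{k+1}`: the gap between two
circularly neighboring points of `{⟨θ⟩, ⟨2θ⟩, …, ⟨q_{k+1}θ⟩}` is `‖q_k θ‖` or
`‖q_k θ‖ + ‖q_{k+1} θ‖`.  The first conjunct treats gaps inside `[0,1)`, the second
the wrap-around gap from the largest point to the smallest one. -/
theorem three_distance_qk (θ : ℝ) (hθ : Irrational θ) (k : ℕ) (hk : 1 ≤ k) :
    (∀ n m : ℕ, 1 ≤ n → n ≤ qden θ (k + 1) → 1 ≤ m → m ≤ qden θ (k + 1) →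
      Int.fract ((n : ℝ) * θ) < Int.fract ((m : ℝ) * θ) →
      (∀ l : ℕ, 1 ≤ l → l ≤ qden θ (k + 1) →
        ¬(Int.fract ((n : ℝ) * θ) < Int.fract ((l : ℝ) * θ) ∧
          Int.fract ((l : ℝ) * θ) < Int.fract ((m : ℝ) * θ))) →
      Int.fract ((m : ℝ) * θ) - Int.fract ((n : ℝ) * θ) = nint ((qden θ k : ℝ) * θ) ∨
      Int.fract ((m : ℝ) * θ) - Int.fract ((n : ℝ) * θ) =
        nint ((qden θ k : ℝ) * θ) + nint ((qden θ (k + 1) : ℝ) * θ)) ∧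
    (∀ n m : ℕ, 1 ≤ n → n ≤ qden θ (k + 1) → 1 ≤ m → m ≤ qden θ (k + 1) →
      (∀ l : ℕ, 1 ≤ l → l ≤ qden θ (k + 1) →
        Int.fract ((l : ℝ) * θ) ≤ Int.fract ((n : ℝ) * θ)) →
      (∀ l : ℕ, 1 ≤ l → l ≤ qden θ (k + 1) →
        Int.fract ((m : ℝ) * θ) ≤ Int.fract ((l : ℝ) * θ)) →
      1 - Int.fract ((n : ℝ) * θ) + Int.fract ((m : ℝ) * θ) = nint ((qden θ k : ℝ) * θ) ∨
      1 - Int.fract ((n : ℝ) * θ) + Int.fract ((m : ℝ) * θ) =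
        nint ((qden θ k : ℝ) * θ) + nint ((qden θ (k + 1) : ℝ) * θ)) := by
  obtain ⟨P, Q, r, r', ε, hεpm, hr'0, hr'r, hrhalf, h2r, hea, heb, hdetZ, hna, hnb⟩ :=
    master hθ hk
  have hr0 : 0 < r := hr'0.trans hr'r
  set a : ℕ := qden θ k with hadef
  set b : ℕ := qden θ (k + 1) with hbdef
  have ha1 : 1 ≤ a := one_le_qden hθ k
  have hb1 : 1 ≤ b := one_le_qden hθ (k + 1)
  have hab : a ≤ b := qden_mono hθ k
  have haZ : (1 : ℤ) ≤ (a : ℤ) := by exact_mod_cast ha1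
  have habZ : (a : ℤ) ≤ (b : ℤ) := by exact_mod_cast hab
  have heaZ : (((a : ℤ) : ℝ)) * θ - P = ε * r := by push_cast; exact_mod_cast hea
  have hebZ : (((b : ℤ) : ℝ)) * θ - Q = -(ε * r') := by push_cast; exact_mod_cast heb
  have hkey := fun (j p : ℤ) (hj0 : j ≠ 0) (hjb : |j| < (b : ℤ)) =>
    key haZ habZ hεpm hr'0 hr'r heaZ hebZ hdetZ j p hj0 hjb
  -- lower bounds on fractional parts of the first b-1 multiples
  have hfr_lo : ∀ l : ℕ, 1 ≤ l → l < b → r ≤ Int.fract ((l : ℝ) * θ) := by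
    intro l hl1 hlb
    have hlZ : (1 : ℤ) ≤ (l : ℤ) := by exact_mod_cast hl1
    have h := (hkey (l : ℤ) ⌊(l : ℝ) * θ⌋ (by omega)
      (by rw [abs_of_nonneg (by positivity)]; exact_mod_cast hlb)).1
    rw [show (((l : ℤ) : ℝ)) = (l : ℝ) by push_cast; ring] at h
    rwa [Int.self_sub_floor, abs_of_nonneg (Int.fract_nonneg _)] at h
  have hfr_hi : ∀ l : ℕ, 1 ≤ l → l < b → Int.fract ((l : ℝ) * θ) ≤ 1 - r := by
    intro l hl1 hlb
    have hlZ : (1 : ℤ) ≤ (l : ℤ) := by exact_mod_cast hl1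
    have h := (hkey (l : ℤ) (⌊(l : ℝ) * θ⌋ + 1) (by omega)
      (by rw [abs_of_nonneg (by positivity)]; exact_mod_cast hlb)).1
    rw [show (((l : ℤ) : ℝ)) = (l : ℝ) by push_cast; ring] at h
    have h2 : (l : ℝ) * θ - ((⌊(l : ℝ) * θ⌋ : ℝ) + 1) = Int.fract ((l : ℝ) * θ) - 1 := by
      rw [← Int.self_sub_floor]; ring
    rw [show ((((⌊(l : ℝ) * θ⌋ + 1 : ℤ)) : ℝ)) = ((⌊(l : ℝ) * θ⌋ : ℝ) + 1) by push_cast; ring,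
      h2, abs_of_nonpos (by linarith [Int.fract_lt_one ((l : ℝ) * θ)])] at h
    linarith
  -- the candidate right-neighbour construction
  have hS : ∀ n : ℕ, 1 ≤ n → n ≤ b → ∃ (l : ℕ) (c : ℤ) (s : ℝ), 1 ≤ l ∧ l ≤ b ∧
      (s = r ∨ s = r + r') ∧ (l : ℝ) * θ = c + Int.fract ((n : ℝ) * θ) + s := by
    intro n hn1 hnb
    have hfract : (n : ℝ) * θ = ⌊(n : ℝ) * θ⌋ + Int.fract ((n : ℝ) * θ) := by
      rw [← Int.self_sub_floor]; ring
    rcases hεpm with hε | hε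
    · have hea' : (a : ℝ) * θ - P = r := by rw [hε] at hea; linarith
      have heb' : (b : ℝ) * θ - Q = -r' := by rw [hε] at heb; linarith
      by_cases hcase : n + a ≤ b
      · refine ⟨n + a, ⌊(n : ℝ) * θ⌋ + P, r, by omega, hcase, Or.inl rfl, ?_⟩
        push_cast
        linear_combination hfract + hea'
      · refine ⟨n + a - b, ⌊(n : ℝ) * θ⌋ + P - Q, r + r', by omega, by omega, Or.inr rfl, ?_⟩
        have hcast : ((n + a - b : ℕ) : ℝ) = (n : ℝ) + a - b := by
          push_cast [Nat.cast_sub (by omega : b ≤ n + a)]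
          ring
        rw [hcast]
        push_cast
        linear_combination hfract + hea' - heb'
    · have hea' : (a : ℝ) * θ - P = -r := by rw [hε] at hea; linarith
      have heb' : (b : ℝ) * θ - Q = r' := by rw [hε] at heb; linarith
      by_cases hcase : a + 1 ≤ n
      · refine ⟨n - a, ⌊(n : ℝ) * θ⌋ - P, r, by omega, by omega, Or.inl rfl, ?_⟩
        have hcast : ((n - a : ℕ) : ℝ) = (n : ℝ) - a := by
          push_cast [Nat.cast_sub (by omega : a ≤ n)]
          ring
        rw [hcast]
        push_cast
        linear_combination hfract - hea'
      · refine ⟨n + b - a, ⌊(n : ℝ) * θ⌋ - P + Q, r + r', by omega, by omega, Or.inr rfl, ?_⟩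
        have hcast : ((n + b - a : ℕ) : ℝ) = (n : ℝ) + b - a := by
          push_cast [Nat.cast_sub (by omega : a ≤ n + b)]
          ring
        rw [hcast]
        push_cast
        linear_combination hfract - hea' + heb'
  constructor
  · -- interior gaps
    intro n m hn1 hnb' hm1 hmb' hlt hbet
    have hnm : n ≠ m := by
      intro h
      rw [h] at hlt
      exact lt_irrefl _ hlt
    set X : ℝ := Int.fract ((n : ℝ) * θ) with hX
    set Y : ℝ := Int.fract ((m : ℝ) * θ) with hY
    have hX0 : 0 ≤ X := Int.fract_nonneg ((n : ℝ) * θ)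
    have hY1 : Y < 1 := Int.fract_lt_one ((m : ℝ) * θ)
    set j : ℤ := (m : ℤ) - (n : ℤ) with hj
    have hj0 : j ≠ 0 := by
      intro h
      apply hnm
      omega
    have hjb : |j| < (b : ℤ) := by
      have h1 : (1 : ℤ) ≤ (n : ℤ) := by exact_mod_cast hn1
      have h2 : (n : ℤ) ≤ (b : ℤ) := by exact_mod_cast hnb'
      have h3 : (1 : ℤ) ≤ (m : ℤ) := by exact_mod_cast hm1
      have h4 : (m : ℤ) ≤ (b : ℤ) := by exact_mod_cast hmb'
      rw [abs_lt]
      omega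
    set p : ℤ := ⌊(m : ℝ) * θ⌋ - ⌊(n : ℝ) * θ⌋ with hp
    have hdj : Y - X = (j : ℝ) * θ - p := by
      rw [hX, hY, hj, hp, ← Int.self_sub_floor, ← Int.self_sub_floor]
      push_cast
      ring
    have hdpos : 0 < Y - X := by linarith
    have hd_lo : r ≤ Y - X := by
      have h := (hkey j p hj0 hjb).1
      rwa [← hdj, abs_of_pos hdpos] at h
    have hd_hi : Y - X ≤ r + r' := by
      obtain ⟨l, c, s, hl1, hlb, hs, hleq⟩ := hS n hn1 hnb'
      have hs0 : 0 < s := by rcases hs with h | h <;> rw [h] <;> linarith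
      have hsle : s ≤ r + r' := by rcases hs with h | h <;> rw [h] <;> linarith
      by_cases hz : X + s < 1
      · have hfz : Int.fract ((l : ℝ) * θ) = X + s :=
          fract_eq_of c (by linarith) hz (by rw [hleq]; ring)
        have hb' := hbet l hl1 hlb
        rw [hfz] at hb'
        push_neg at hb'
        have : Y ≤ X + s := by
          by_contra hcon
          push_neg at hcon
          exact absurd (hb' (by linarith)) (by push_neg; linarith)
        linarith
      · push_neg at hz
        linarith
    have hch := (hkey j p hj0 hjb).2 (by linarith) (by linarith [hdj])
    rw [← hdj] at hch
    rw [hna, hnb]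
    exact hch
  · -- wrap-around gap
    intro n m hn1 hnb' hm1 hmb' hmax hmin
    set X : ℝ := Int.fract ((n : ℝ) * θ) with hX
    set Y : ℝ := Int.fract ((m : ℝ) * θ) with hY
    rw [hna, hnb]
    rcases hεpm with hε | hε
    · have hea' : (a : ℝ) * θ = P + r := by rw [hε] at hea; linarith
      have heb' : (b : ℝ) * θ = (Q - 1) + (1 - r') := by rw [hε] at heb; linarith
      have hfa : Int.fract ((a : ℝ) * θ) = r := fract_eq_of P (by linarith) (by linarith) hea'
      have hfb : Int.fract ((b : ℝ) * θ) = 1 - r' :=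
        fract_eq_of (Q - 1) (by linarith) (by linarith) (by rw [heb']; push_cast; ring)
      -- n must be b
      have hXb : 1 - r' ≤ X := by
        have := hmax b hb1 le_rfl
        rwa [hfb] at this
      have hn_eq : n = b := by
        by_contra hne
        have hnlt : n < b := by omega
        have := hfr_hi n hn1 hnlt
        rw [← hX] at this
        linarith
      have hXeq : X = 1 - r' := by rw [hX, hn_eq, hfb]
      -- m must give r
      have hYa : Y ≤ r := by
        have := hmin a (by omega) (by omega)
        rwa [hfa] at this
      have hm_lt : m < b := by
        by_contra hge
        have hm_eq : m = b := by omega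
        rw [hY, hm_eq, hfb] at hYa
        linarith
      have hYeq : Y = r := by
        have := hfr_lo m hm1 hm_lt
        rw [← hY] at this
        linarith
      right
      rw [hXeq, hYeq]
      ring
    · have hea' : (a : ℝ) * θ = (P - 1) + (1 - r) := by rw [hε] at hea; linarith
      have heb' : (b : ℝ) * θ = Q + r' := by rw [hε] at heb; linarith
      have hfa : Int.fract ((a : ℝ) * θ) = 1 - r :=
        fract_eq_of (P - 1) (by linarith) (by linarith) (by rw [hea']; push_cast; ring)
      have hfb : Int.fract ((b : ℝ) * θ) = r' := fract_eq_of Q (by linarith) (by linarith) heb'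
      have hXa : 1 - r ≤ X := by
        have := hmax a (by omega) (by omega)
        rwa [hfa] at this
      have hn_lt : n < b := by
        by_contra hge
        have hn_eq : n = b := by omega
        rw [hX, hn_eq, hfb] at hXa
        linarith
      have hXeq : X = 1 - r := by
        have := hfr_hi n hn1 hn_lt
        rw [← hX] at this
        linarith
      have hYb : Y ≤ r' := by
        have := hmin b hb1 le_rfl
        rwa [hfb] at this
      have hm_eq : m = b := by
        by_contra hne
        have hmlt : m < b := by omega
        have := hfr_lo m hm1 hmlt
        rw [← hY] at this
        linarith
      have hYeq : Y = r' := by rw [hY, hm_eq, hfb]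
      right
      rw [hXeq, hYeq]
      ring
end
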